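/- arXiv:2509.03475 — 9 statements merged into one kernel-verified Lean document; each statement's English description precedes it below -/
import Mathlib

section
/- Let E be a real Hilbert space and f : E → ℝ convex and lower semicontinuous. If p minimizes z ↦ f(z) + (1/2)‖z − v‖² and q minimizes z ↦ f(z) + (1/2)‖z − w‖², then ‖p − q‖² ≤ ⟨p − q, v − w⟩ (firm nonexpansiveness), and consequently ‖p − q‖ ≤ ‖v − w‖, i.e., the proximal operator of f is nonexpansive (1-Lipschitz) and continuous. -/
/-!
Minimality of `p` along the segment from `p` towards any `z`, combined with convexity of `f`,
gives after dividing by the step length and letting it tend to zero the variational inequality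
`⟪v - p, z - p⟫ ≤ f z - f p`, i.e. `v - p ∈ ∂f(p)`. Adding this inequality at `p` (tested with `q`)
to the one at `q` (tested with `p`) is monotonicity of `∂f`, which is exactly
`‖p - q‖² ≤ ⟪p - q, v - w⟫`; Cauchy–Schwarz then gives `‖p - q‖ ≤ ‖v - w‖`.
-/

open scoped RealInnerProductSpace
open Filter Topology Set

lemma le_of_forall_pos_le_add_mul {a b c : ℝ} (h : ∀ t : ℝ, 0 < t → t ≤ 1 → a ≤ b + t * c) :
    a ≤ b := by
  have hlim : Tendsto (fun t : ℝ => b + t * c) (𝓝 0) (𝓝 b) := by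
    simpa using ((tendsto_id (x := 𝓝 (0 : ℝ))).mul_const c).const_add b
  refine ge_of_tendsto (hlim.mono_left (nhdsWithin_le_nhds (s := Ioi 0))) ?_
  filter_upwards [Ioc_mem_nhdsGT one_pos] with t ht using h t ht.1 ht.2

section InnerProductSpace

variable {E : Type*} [SeminormedAddCommGroup E] [InnerProductSpace ℝ E]

lemma norm_le_norm_of_norm_sq_le_inner {x y : E} (h : ‖x‖ ^ 2 ≤ ⟪x, y⟫) : ‖x‖ ≤ ‖y‖ := by
  nlinarith [real_inner_le_norm x y, norm_nonneg x, norm_nonneg y]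

lemma ConvexOn.inner_sub_le_of_prox {f : E → ℝ} (hf : ConvexOn ℝ univ f) {v p : E}
    (hp : ∀ z : E, f p + (1 / 2) * ‖p - v‖ ^ 2 ≤ f z + (1 / 2) * ‖z - v‖ ^ 2) (z : E) :
    ⟪v - p, z - p⟫ ≤ f z - f p := by
  refine le_of_forall_pos_le_add_mul (c := ‖z - p‖ ^ 2 / 2) fun t ht ht1 => ?_
  have hconv : f ((1 - t) • p + t • z) ≤ (1 - t) * f p + t * f z :=
    hf.2 (mem_univ p) (mem_univ z) (by linarith) ht.le (by ring)
  have hsegment : (1 - t) • p + t • z - v = (p - v) + t • (z - p) := by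
    rw [sub_smul, one_smul, smul_sub]; abel
  have hexpand : ‖(1 - t) • p + t • z - v‖ ^ 2
      = ‖p - v‖ ^ 2 + 2 * (t * ⟪p - v, z - p⟫) + t ^ 2 * ‖z - p‖ ^ 2 := by
    rw [hsegment, norm_add_sq_real, real_inner_smul_right, norm_smul, Real.norm_eq_abs, mul_pow,
      sq_abs]
  have hmin := hp ((1 - t) • p + t • z)
  rw [hexpand] at hmin
  have hswap : ⟪v - p, z - p⟫ = -⟪p - v, z - p⟫ := by
    rw [← inner_neg_left, neg_sub]
  -- after cancelling, `hmin` and `hconv` say `t * (⟪v - p, z - p⟫ - (f z - f p)) ≤ t² ‖z - p‖² / 2`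
  rw [hswap]
  nlinarith

lemma ConvexOn.norm_sub_sq_le_inner_of_prox {f : E → ℝ} (hf : ConvexOn ℝ univ f) {v w p q : E}
    (hp : ∀ z : E, f p + (1 / 2) * ‖p - v‖ ^ 2 ≤ f z + (1 / 2) * ‖z - v‖ ^ 2)
    (hq : ∀ z : E, f q + (1 / 2) * ‖q - w‖ ^ 2 ≤ f z + (1 / 2) * ‖z - w‖ ^ 2) :
    ‖p - q‖ ^ 2 ≤ ⟪p - q, v - w⟫ := by
  have hpq := hf.inner_sub_le_of_prox hp q
  have hqp := hf.inner_sub_le_of_prox hq p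
  have hsum : ⟪p - q, v - w⟫ - ‖p - q‖ ^ 2 = -⟪v - p, q - p⟫ - ⟪w - q, p - q⟫ := by
    rw [← real_inner_self_eq_norm_sq]
    simp only [inner_sub_left, inner_sub_right, real_inner_comm p v, real_inner_comm q v,
      real_inner_comm p w, real_inner_comm q w, real_inner_comm q p]
    ring
  linarith

end InnerProductSpace

theorem prox_firmly_nonexpansive_general
    {E : Type*} [NormedAddCommGroup E] [InnerProductSpace ℝ E]
    (f : E → ℝ) (hconv : ConvexOn ℝ Set.univ f)
    (v w p q : E)
    (hp : ∀ z : E, f p + (1 / 2) * ‖p - v‖ ^ 2 ≤ f z + (1 / 2) * ‖z - v‖ ^ 2)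
    (hq : ∀ z : E, f q + (1 / 2) * ‖q - w‖ ^ 2 ≤ f z + (1 / 2) * ‖z - w‖ ^ 2) :
    ‖p - q‖ ^ 2 ≤ ⟪p - q, v - w⟫ ∧ ‖p - q‖ ≤ ‖v - w‖ := by
  have hfirm := hconv.norm_sub_sq_le_inner_of_prox hp hq
  exact ⟨hfirm, norm_le_norm_of_norm_sq_le_inner hfirm⟩

/-- Firm nonexpansiveness (hence nonexpansiveness) of the proximal operator of a convex
lower semicontinuous function on a real Hilbert space. -/
theorem prox_firmly_nonexpansive
    {E : Type*} [NormedAddCommGroup E] [InnerProductSpace ℝ E] [CompleteSpace E]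
    (f : E → ℝ) (hconv : ConvexOn ℝ Set.univ f) (hlsc : LowerSemicontinuous f)
    (v w p q : E)
    (hp : ∀ z : E, f p + (1 / 2) * ‖p - v‖ ^ 2 ≤ f z + (1 / 2) * ‖z - v‖ ^ 2)
    (hq : ∀ z : E, f q + (1 / 2) * ‖q - w‖ ^ 2 ≤ f z + (1 / 2) * ‖z - w‖ ^ 2) :
    ‖p - q‖ ^ 2 ≤ ⟪p - q, v - w⟫ ∧ ‖p - q‖ ≤ ‖v - w‖ :=
  prox_firmly_nonexpansive_general f hconv v w p q hp hq
end

section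
/- (Baillon–Haddad) Let E be a real Hilbert space, f : E → ℝ convex and differentiable, and suppose the gradient ∇f is Lipschitz with constant L > 0. Then ∇f is (1/L)-cocoercive: for all x, y ∈ E, ⟨∇f(x) − ∇f(y), x − y⟩ ≥ (1/L)‖∇f(x) − ∇f(y)‖². -/
/-!
Convexity gives the lower bound `f x + ⟪∇f x, y - x⟫ ≤ f y`, and the Lipschitz gradient the
upper bound `f y ≤ f x + ⟪∇f x, y - x⟫ + L/2 ‖y - x‖²`. Applying the lower bound at `x` and the
upper bound at `y` to the gradient step `z = y - (1/L)(∇f y - ∇f x)` sharpens the lower bound by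
`‖∇f x - ∇f y‖² / (2L)`; adding the sharpened bound to its copy with `x` and `y` exchanged
gives cocoercivity.
-/

open scoped RealInnerProductSpace

section

variable {E : Type*} [NormedAddCommGroup E] [InnerProductSpace ℝ E] [CompleteSpace E] {f : E → ℝ}

theorem HasGradientAt.hasDerivAt_add_smul {g x v : E} {t : ℝ}
    (hf : HasGradientAt f g (x + t • v)) :
    HasDerivAt (fun s : ℝ => f (x + s • v)) ⟪g, v⟫ t := by
  have hline : HasDerivAt (fun s : ℝ => x + s • v) v t := by
    simpa using ((hasDerivAt_id t).smul_const v).const_add x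
  have hcomp := (hasGradientAt_iff_hasFDerivAt.mp hf).comp_hasDerivAt t hline
  simp only [InnerProductSpace.toDual_apply_apply] at hcomp
  exact hcomp

theorem ConvexOn.add_inner_le_of_hasGradientAt {s : Set E} {g x y : E}
    (hconv : ConvexOn ℝ s f) (hx : x ∈ s) (hy : y ∈ s) (hf : HasGradientAt f g x) :
    f x + ⟪g, y - x⟫ ≤ f y := by
  have hseg : ConvexOn ℝ (Set.Icc 0 1) (fun t : ℝ => f (x + t • (y - x))) := by
    have hsub : Set.Icc (0 : ℝ) 1 ⊆ AffineMap.lineMap x y ⁻¹' s := fun t ht =>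
      hconv.1.lineMap_mem hx hy ht
    refine ((hconv.comp_affineMap _).subset hsub (convex_Icc 0 1)).congr fun t _ => ?_
    simp [AffineMap.lineMap_apply_module', add_comm]
  have hderiv : HasDerivAt (fun t : ℝ => f (x + t • (y - x))) ⟪g, y - x⟫ 0 :=
    HasGradientAt.hasDerivAt_add_smul (by simpa using hf)
  have := hseg.le_slope_of_hasDerivAt (by simp) (by simp) one_pos hderiv
  simp only [slope_def_field, one_smul, add_sub_cancel, zero_smul, add_zero, sub_zero,
    div_one] at this
  linarith

theorem le_add_inner_add_of_lipschitz_gradient {f' : E → E} {L : ℝ}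
    (hf : ∀ x, HasGradientAt f (f' x) x) (hlip : ∀ x y, ‖f' x - f' y‖ ≤ L * ‖x - y‖) (a b : E) :
    f b ≤ f a + ⟪f' a, b - a⟫ + L / 2 * ‖b - a‖ ^ 2 := by
  set v := b - a
  let φ : ℝ → ℝ := fun t => f (a + t • v) - f a - t * ⟪f' a, v⟫
  have hφ : ∀ t, HasDerivAt φ ⟪f' (a + t • v) - f' a, v⟫ t := fun t => by
    rw [inner_sub_left]
    exact ((hf (a + t • v)).hasDerivAt_add_smul.sub_const (f a)).sub
      (hasDerivAt_mul_const _)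
  have hB : ∀ t, HasDerivAt (fun t : ℝ => L / 2 * ‖v‖ ^ 2 * t ^ 2) (L * ‖v‖ ^ 2 * t) t :=
    fun t => ((hasDerivAt_pow 2 t).const_mul _).congr_deriv (by push_cast; ring)
  have hderiv_le : ∀ t ∈ Set.Ico (0 : ℝ) 1, ⟪f' (a + t • v) - f' a, v⟫ ≤ L * ‖v‖ ^ 2 * t := by
    rintro t ⟨ht, -⟩
    calc ⟪f' (a + t • v) - f' a, v⟫ ≤ ‖f' (a + t • v) - f' a‖ * ‖v‖ := real_inner_le_norm _ _
      _ ≤ L * ‖t • v‖ * ‖v‖ := by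
        gcongr
        simpa using hlip (a + t • v) a
      _ = L * ‖v‖ ^ 2 * t := by rw [norm_smul, Real.norm_of_nonneg ht]; ring
  have hbound := image_le_of_deriv_right_le_deriv_boundary
    (fun t _ => (hφ t).continuousAt.continuousWithinAt) (fun t _ => (hφ t).hasDerivWithinAt)
    (by simp [φ]) (fun t _ => (hB t).continuousAt.continuousWithinAt)
    (fun t _ => (hB t).hasDerivWithinAt) hderiv_le (Set.right_mem_Icc.mpr zero_le_one)
  simp only [one_smul, add_sub_cancel, one_mul, one_pow, mul_one, φ, v] at hbound
  linarith

theorem ConvexOn.add_inner_add_sq_norm_gradient_sub_le {f' : E → E} {L : ℝ} (hL : 0 < L)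
    (hconv : ConvexOn ℝ Set.univ f) (hf : ∀ x, HasGradientAt f (f' x) x)
    (hlip : ∀ x y, ‖f' x - f' y‖ ≤ L * ‖x - y‖) (x y : E) :
    f x + ⟪f' x, y - x⟫ + 1 / (2 * L) * ‖f' x - f' y‖ ^ 2 ≤ f y := by
  set d := f' y - f' x
  set z := y - (1 / L) • d
  have hlower := hconv.add_inner_le_of_hasGradientAt (Set.mem_univ x) (Set.mem_univ z) (hf x)
  have hupper := le_add_inner_add_of_lipschitz_gradient hf hlip y z
  have hzx : z - x = (y - x) - (1 / L) • d := by simp only [z]; abel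
  have hzy : z - y = -((1 / L) • d) := by simp only [z]; abel
  have hd : ⟪f' y, d⟫ - ⟪f' x, d⟫ = ‖d‖ ^ 2 := by
    rw [← inner_sub_left, real_inner_self_eq_norm_sq]
  rw [hzx, inner_sub_right, real_inner_smul_right] at hlower
  rw [hzy, inner_neg_right, real_inner_smul_right, norm_neg, norm_smul,
    Real.norm_of_nonneg (by positivity)] at hupper
  have hstep : L / 2 * (1 / L * ‖d‖) ^ 2 = 1 / (2 * L) * ‖d‖ ^ 2 := by field_simp
  have hgain : 1 / L * ⟪f' y, d⟫ - 1 / L * ⟪f' x, d⟫ = 2 * (1 / (2 * L) * ‖d‖ ^ 2) := by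
    rw [← mul_sub, hd]; field_simp
  rw [norm_sub_rev]
  linarith

end

/-- Baillon–Haddad theorem: the gradient of a convex differentiable function with
`L`-Lipschitz gradient is `(1/L)`-cocoercive. -/
theorem baillon_haddad
    {E : Type*} [NormedAddCommGroup E] [InnerProductSpace ℝ E] [CompleteSpace E]
    (f : E → ℝ) (f' : E → E) (L : ℝ) (hL : 0 < L)
    (hconv : ConvexOn ℝ Set.univ f)
    (hdiff : ∀ x : E, HasGradientAt f (f' x) x)
    (hlip : ∀ x y : E, ‖f' x - f' y‖ ≤ L * ‖x - y‖) :
    ∀ x y : E, (1 / L) * ‖f' x - f' y‖ ^ 2 ≤ ⟪f' x - f' y, x - y⟫ := by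
  intro x y
  have hxy := hconv.add_inner_add_sq_norm_gradient_sub_le hL hdiff hlip x y
  have hyx := hconv.add_inner_add_sq_norm_gradient_sub_le hL hdiff hlip y x
  rw [norm_sub_rev] at hyx
  rw [← neg_sub x y, inner_neg_right] at hxy
  rw [inner_sub_left]
  have hhalf : 1 / L = 2 * (1 / (2 * L)) := by field_simp
  rw [hhalf]
  linarith
end

section
/- Let E be a real Hilbert space, f : E → ℝ be μ-strongly convex (μ > 0), differentiable, with L-Lipschitz gradient (μ ≤ L), and let g : E → ℝ be convex and lower semicontinuous. Fix a step size λ ∈ (0, 2/L), and let x* be a minimizer of f + g. Define the proximal gradient iterates by x_{k+1} = prox_{λg}(x_k − λ∇f(x_k)), i.e., x_{k+1} is the minimizer of z ↦ g(z) + (1/(2λ))‖z − (x_k − λ∇f(x_k))‖². Then for all k, ‖x_k − x*‖ ≤ ϱ^k ‖x₀ − x*‖, where ϱ = max(|1 − λL|, |1 − λμ|) < 1. -/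
/-!
Write `f = h + (μ/2)‖·‖²` with `h` convex. The descent lemma gives `h` the quadratic upper bound
with constant `L - μ`, so by Baillon–Haddad cocoercivity `∇f a - ∇f b` lies in the ball of
radius `(L - μ)/2 · ‖a - b‖` around `((μ + L)/2) • (a - b)`. The triangle inequality then makes
the gradient step `x ↦ x - λ∇f x` Lipschitz with constant
`|1 - λ(μ + L)/2| + λ(L - μ)/2 = max (1 - λμ) (λL - 1) ≤ ϱ`.
The optimality condition of the prox subproblem, `(u - p)/λ ∈ ∂g p`, makes the prox step
firmly nonexpansive, and by the first-order optimality condition of `f + g` the minimizer `x*`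
is a fixed point of the composite step. Hence `‖x (k+1) - x*‖ ≤ ϱ ‖x k - x*‖`.
-/

open scoped RealInnerProductSpace
open Set Filter Topology

lemma abs_one_sub_mul_add_le_max (lam mu L : ℝ) :
    |1 - lam * ((mu + L) / 2)| + lam * ((L - mu) / 2) ≤ max |1 - lam * L| |1 - lam * mu| := by
  rcases abs_cases (1 - lam * ((mu + L) / 2)) with ⟨h, -⟩ | ⟨h, -⟩ <;> rw [h]
  · exact le_max_of_le_right (le_trans (by linarith) (le_abs_self _))
  · exact le_max_of_le_left (le_trans (by linarith) (neg_le_abs _))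

lemma max_abs_one_sub_mul_lt_one {mu L lam : ℝ} (hmu : 0 < mu) (hmuL : mu ≤ L) (hlam : 0 < lam)
    (hlamL : lam * L < 2) : max |1 - lam * L| |1 - lam * mu| < 1 := by
  have hlammu : lam * mu ≤ lam * L := mul_le_mul_of_nonneg_left hmuL hlam.le
  have : 0 < lam * mu := mul_pos hlam hmu
  refine max_lt (abs_lt.2 ⟨?_, ?_⟩) (abs_lt.2 ⟨?_, ?_⟩) <;> linarith

section InnerProductSpace

variable {E : Type*} [NormedAddCommGroup E] [InnerProductSpace ℝ E]

lemma ConvexOn.comp_line {φ : E → ℝ} (hφ : ConvexOn ℝ univ φ) (a v : E) :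
    ConvexOn ℝ univ (fun s : ℝ => φ (a + s • v)) := by
  simpa [Function.comp_def, AffineMap.lineMap_apply_module', add_comm] using
    hφ.comp_affineMap (AffineMap.lineMap a (a + v))

lemma norm_sub_smul_le_of_norm_sub_smul_le {D G : E} {m r lam : ℝ} (hlam : 0 ≤ lam)
    (h : ‖G - m • D‖ ≤ r * ‖D‖) : ‖D - lam • G‖ ≤ (|1 - lam * m| + lam * r) * ‖D‖ :=
  calc ‖D - lam • G‖ = ‖(1 - lam * m) • D - lam • (G - m • D)‖ := by congr 1; module
    _ ≤ ‖(1 - lam * m) • D‖ + ‖lam • (G - m • D)‖ := norm_sub_le _ _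
    _ ≤ |1 - lam * m| * ‖D‖ + lam * (r * ‖D‖) := by
      rw [norm_smul, norm_smul, Real.norm_eq_abs, Real.norm_of_nonneg hlam]
      gcongr
    _ = (|1 - lam * m| + lam * r) * ‖D‖ := by ring

lemma norm_sub_le_of_le_add_inner {g : E → ℝ} {s : ℝ} (hs : 0 < s) {u v p q : E}
    (hp : ∀ z, g p ≤ g z + ⟪s • (p - u), z - p⟫) (hq : ∀ z, g q ≤ g z + ⟪s • (q - v), z - q⟫) :
    ‖p - q‖ ≤ ‖u - v‖ := by
  have hfirm : ‖p - q‖ ^ 2 ≤ ⟪u - v, p - q⟫ := by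
    have hsum : 0 ≤ s * (⟪u - v, p - q⟫ - ‖p - q‖ ^ 2) := by
      have h := add_le_add (hp q) (hq p)
      rw [real_inner_smul_left, real_inner_smul_left] at h
      have : ⟪p - u, q - p⟫ + ⟪q - v, p - q⟫ = ⟪u - v, p - q⟫ - ‖p - q‖ ^ 2 := by
        rw [← real_inner_self_eq_norm_sq, ← neg_sub p q, inner_neg_right, neg_add_eq_sub,
          ← inner_sub_left, ← inner_sub_left]
        congr 1; abel
      nlinarith
    nlinarith
  nlinarith [real_inner_le_norm (u - v) (p - q), norm_nonneg (p - q), norm_nonneg (u - v)]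

variable [CompleteSpace E]

lemma HasGradientAt.sub {φ ψ : E → ℝ} {φ' ψ' x : E} (hφ : HasGradientAt φ φ' x)
    (hψ : HasGradientAt ψ ψ' x) : HasGradientAt (fun y => φ y - ψ y) (φ' - ψ') x := by
  rw [hasGradientAt_iff_hasFDerivAt, map_sub]
  exact (hasGradientAt_iff_hasFDerivAt.1 hφ).sub (hasGradientAt_iff_hasFDerivAt.1 hψ)

lemma hasGradientAt_const_mul_norm_sub_sq (c : ℝ) (u x : E) :
    HasGradientAt (fun z => c * ‖z - u‖ ^ 2) ((2 * c) • (x - u)) x := by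
  rw [hasGradientAt_iff_hasFDerivAt]
  refine (((hasFDerivAt_id x).sub_const u).norm_sq.const_mul c).congr_fderiv ?_
  ext y
  simp only [smul_apply, ContinuousLinearMap.comp_id, coe_innerSL_apply,
    nsmul_eq_mul, Nat.cast_ofNat, smul_eq_mul, map_smul, InnerProductSpace.toDual_apply_apply,
    map_sub, id_eq, sub_apply]
  ring

lemma HasGradientAt.hasDerivAt_comp_line {φ : E → ℝ} {φ' a v : E} {t : ℝ}
    (h : HasGradientAt φ φ' (a + t • v)) :
    HasDerivAt (fun s : ℝ => φ (a + s • v)) ⟪φ', v⟫ t := by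
  have hline : HasDerivAt (fun s : ℝ => a + s • v) v t := by
    simpa using ((hasDerivAt_id t).smul_const v).const_add a
  simpa [Function.comp_def, InnerProductSpace.toDual_apply_apply] using
    (hasGradientAt_iff_hasFDerivAt.1 h).comp_hasDerivAt t hline

lemma ConvexOn.add_inner_le_of_hasGradientAt_s5 {φ : E → ℝ} {φ' a : E} (hφ : ConvexOn ℝ univ φ)
    (h : HasGradientAt φ φ' a) (b : E) : φ a + ⟪φ', b - a⟫ ≤ φ b := by
  have hd : HasDerivAt (fun s : ℝ => φ (a + s • (b - a))) ⟪φ', b - a⟫ 0 :=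
    HasGradientAt.hasDerivAt_comp_line (by simpa using h)
  have := (hφ.comp_line a (b - a)).le_slope_of_hasDerivAt (mem_univ 0) (mem_univ 1) one_pos hd
  simp only [slope_def_field, one_smul, add_sub_cancel, zero_smul, add_zero, sub_zero, div_one]
    at this
  linarith

lemma ConvexOn.le_add_inner_of_forall_add_le {F g : E → ℝ} {F' x : E} (hg : ConvexOn ℝ univ g)
    (hF : HasGradientAt F F' x) (hmin : ∀ z, F x + g x ≤ F z + g z) (z : E) :
    g x ≤ g z + ⟪F', z - x⟫ := by
  have hd : HasDerivAt (fun s : ℝ => F (x + s • (z - x))) ⟪F', z - x⟫ 0 :=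
    HasGradientAt.hasDerivAt_comp_line (by simpa using hF)
  have hslope : ∀ t ∈ Ioc (0 : ℝ) 1,
      g x - g z ≤ t⁻¹ • (F (x + (0 + t) • (z - x)) - F (x + (0 : ℝ) • (z - x))) := by
    rintro t ⟨ht0, ht1⟩
    have hconv := (hg.comp_line x (z - x)).2 (mem_univ 0) (mem_univ 1) (sub_nonneg.2 ht1) ht0.le
      (sub_add_cancel 1 t)
    simp only [smul_eq_mul, mul_zero, mul_one, zero_add, zero_smul, add_zero, one_smul,
      add_sub_cancel] at hconv ⊢
    rw [le_inv_mul_iff₀ ht0]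
    nlinarith [hmin (x + t • (z - x))]
  have := ge_of_tendsto hd.tendsto_slope_zero_right
    (mem_of_superset (Ioc_mem_nhdsGT one_pos) hslope)
  linarith

lemma le_add_inner_add_mul_norm_sq_of_lipschitz {φ : E → ℝ} {φ' : E → E} {ℓ : ℝ}
    (hφ : ∀ x, HasGradientAt φ (φ' x) x) (hlip : ∀ x y, ‖φ' x - φ' y‖ ≤ ℓ * ‖x - y‖) (a b : E) :
    φ b ≤ φ a + ⟪φ' a, b - a⟫ + ℓ / 2 * ‖b - a‖ ^ 2 := by
  set v := b - a
  set ψ : ℝ → ℝ := fun s => φ (a + s • v) - s * ⟪φ' a, v⟫ - ℓ / 2 * ‖v‖ ^ 2 * s ^ 2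
  have hψ : ∀ t, HasDerivAt ψ (⟪φ' (a + t • v), v⟫ - ⟪φ' a, v⟫ - ℓ * ‖v‖ ^ 2 * t) t := by
    intro t
    refine ((((hφ (a + t • v)).hasDerivAt_comp_line).sub (hasDerivAt_mul_const _)).sub
      ((hasDerivAt_pow 2 t).const_mul (ℓ / 2 * ‖v‖ ^ 2))).congr_deriv ?_
    push_cast
    ring
  have hderiv_nonpos : ∀ t ∈ interior (Icc (0 : ℝ) 1),
      ⟪φ' (a + t • v), v⟫ - ⟪φ' a, v⟫ - ℓ * ‖v‖ ^ 2 * t ≤ 0 := by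
    intro t ht
    rw [interior_Icc] at ht
    have hinner : ⟪φ' (a + t • v) - φ' a, v⟫ ≤ ℓ * ‖v‖ ^ 2 * t :=
      calc ⟪φ' (a + t • v) - φ' a, v⟫
          ≤ ‖φ' (a + t • v) - φ' a‖ * ‖v‖ := real_inner_le_norm _ _
        _ ≤ ℓ * ‖a + t • v - a‖ * ‖v‖ := by gcongr; exact hlip _ _
        _ = ℓ * ‖v‖ ^ 2 * t := by
          rw [add_sub_cancel_left, norm_smul, Real.norm_of_nonneg ht.1.le]; ring
    rw [inner_sub_left] at hinner
    linarith
  have hanti : AntitoneOn ψ (Icc 0 1) :=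
    antitoneOn_of_hasDerivWithinAt_nonpos (convex_Icc 0 1)
      (HasDerivAt.continuousOn fun t _ => hψ t) (fun t _ => (hψ t).hasDerivWithinAt)
      hderiv_nonpos
  have := hanti (left_mem_Icc.2 zero_le_one) (right_mem_Icc.2 zero_le_one) zero_le_one
  simp only [ψ, v, zero_smul, one_smul, add_zero, add_sub_cancel, zero_mul, one_mul, sub_zero,
    ne_eq, OfNat.ofNat_ne_zero, not_false_eq_true, zero_pow, mul_zero, one_pow, mul_one] at this
  linarith

-- `z` below minimizes the quadratic upper bound `hdesc u`.
lemma ConvexOn.add_inner_add_norm_sq_le {φ : E → ℝ} {φ' : E → E} {ℓ : ℝ} (hℓ : 0 < ℓ)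
    (hφ : ConvexOn ℝ univ φ) (hgrad : ∀ x, HasGradientAt φ (φ' x) x)
    (hdesc : ∀ a b, φ b ≤ φ a + ⟪φ' a, b - a⟫ + ℓ / 2 * ‖b - a‖ ^ 2) (u v : E) :
    φ v + ⟪φ' v, u - v⟫ + 1 / (2 * ℓ) * ‖φ' u - φ' v‖ ^ 2 ≤ φ u := by
  set w := φ' u - φ' v
  set z := u - ℓ⁻¹ • w
  have hlow := hφ.add_inner_le_of_hasGradientAt_s5 (hgrad v) z
  have hup := hdesc u z
  have hzv : z - v = (u - v) - ℓ⁻¹ • w := by simp only [z]; abel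
  have hzu : z - u = -(ℓ⁻¹ • w) := by simp only [z]; abel
  rw [hzv, inner_sub_right, real_inner_smul_right] at hlow
  rw [hzu, inner_neg_right, real_inner_smul_right, norm_neg, norm_smul, Real.norm_eq_abs,
    abs_inv, abs_of_pos hℓ] at hup
  have hw : ⟪φ' u, w⟫ - ⟪φ' v, w⟫ = ‖w‖ ^ 2 := by
    rw [← inner_sub_left, real_inner_self_eq_norm_sq]
  have key : ℓ⁻¹ * ⟪φ' u, w⟫ - ℓ⁻¹ * ⟪φ' v, w⟫ - ℓ / 2 * (ℓ⁻¹ * ‖w‖) ^ 2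
      = 1 / (2 * ℓ) * ‖w‖ ^ 2 := by
    rw [← mul_sub, hw]; field_simp; ring
  linarith

-- Baillon–Haddad; the degenerate constant `ℓ = 0` is reached as the limit of `ℓ' ↓ ℓ`.
lemma ConvexOn.norm_sub_sq_le_mul_inner {φ : E → ℝ} {φ' : E → E} {ℓ : ℝ} (hℓ : 0 ≤ ℓ)
    (hφ : ConvexOn ℝ univ φ) (hgrad : ∀ x, HasGradientAt φ (φ' x) x)
    (hdesc : ∀ a b, φ b ≤ φ a + ⟪φ' a, b - a⟫ + ℓ / 2 * ‖b - a‖ ^ 2) (a b : E) :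
    ‖φ' a - φ' b‖ ^ 2 ≤ ℓ * ⟪φ' a - φ' b, a - b⟫ := by
  have hlarger : ∀ ℓ' > ℓ, ‖φ' a - φ' b‖ ^ 2 ≤ ℓ' * ⟪φ' a - φ' b, a - b⟫ := by
    intro ℓ' hℓ'
    have hℓ'pos : 0 < ℓ' := hℓ.trans_lt hℓ'
    have hdesc' : ∀ a b, φ b ≤ φ a + ⟪φ' a, b - a⟫ + ℓ' / 2 * ‖b - a‖ ^ 2 := fun a b =>
      (hdesc a b).trans (by gcongr)
    have hab := hφ.add_inner_add_norm_sq_le hℓ'pos hgrad hdesc' a b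
    have hba := hφ.add_inner_add_norm_sq_le hℓ'pos hgrad hdesc' b a
    rw [norm_sub_rev (φ' b)] at hba
    have hsum : ℓ'⁻¹ * ‖φ' a - φ' b‖ ^ 2 ≤ ⟪φ' a - φ' b, a - b⟫ := by
      have : ⟪φ' b, a - b⟫ + ⟪φ' a, b - a⟫ = -⟪φ' a - φ' b, a - b⟫ := by
        rw [inner_sub_left, ← neg_sub a b, inner_neg_right]; ring
      have : 1 / (2 * ℓ') + 1 / (2 * ℓ') = ℓ'⁻¹ := by field_simp; ring
      nlinarith
    rwa [inv_mul_le_iff₀ hℓ'pos] at hsum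
  have hlim : Tendsto (fun ℓ' => ℓ' * ⟪φ' a - φ' b, a - b⟫) (𝓝[>] ℓ)
      (𝓝 (ℓ * ⟪φ' a - φ' b, a - b⟫)) :=
    ((continuous_mul_const _).tendsto ℓ).mono_left nhdsWithin_le_nhds
  exact ge_of_tendsto hlim (eventually_nhdsWithin_of_forall hlarger)

-- Cocoercivity of the gradient of the convex function `f - (μ/2)‖·‖²`, whose quadratic upper
-- bound has constant `L - μ`.
lemma norm_gradient_sub_sub_smul_le {f : E → ℝ} {f' : E → E} {mu L : ℝ} (hmuL : mu ≤ L)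
    (hstrong : ConvexOn ℝ univ (fun x => f x - mu / 2 * ‖x‖ ^ 2))
    (hdiff : ∀ x, HasGradientAt f (f' x) x) (hlip : ∀ x y, ‖f' x - f' y‖ ≤ L * ‖x - y‖)
    (a b : E) : ‖(f' a - f' b) - ((mu + L) / 2) • (a - b)‖ ≤ (L - mu) / 2 * ‖a - b‖ := by
  have hgrad : ∀ x, HasGradientAt (fun x => f x - mu / 2 * ‖x‖ ^ 2) (f' x - mu • x) x := by
    intro x
    simpa [mul_div_cancel₀] using (hdiff x).sub (hasGradientAt_const_mul_norm_sub_sq (mu / 2) 0 x)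
  have hdesc : ∀ u z, f z - mu / 2 * ‖z‖ ^ 2 ≤ f u - mu / 2 * ‖u‖ ^ 2
      + ⟪f' u - mu • u, z - u⟫ + (L - mu) / 2 * ‖z - u‖ ^ 2 := by
    intro u z
    have hd := le_add_inner_add_mul_norm_sq_of_lipschitz hdiff hlip u z
    have hz : ‖z‖ ^ 2 = ‖u‖ ^ 2 + 2 * ⟪u, z - u⟫ + ‖z - u‖ ^ 2 := by
      rw [← norm_add_sq_real, add_sub_cancel]
    rw [inner_sub_left, real_inner_smul_left, hz]
    linarith
  have hco := hstrong.norm_sub_sq_le_mul_inner (sub_nonneg.2 hmuL) hgrad hdesc a b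
  have hH : (f' a - mu • a) - (f' b - mu • b) = (f' a - f' b) - mu • (a - b) := by module
  rw [hH] at hco
  have hball : (f' a - f' b) - ((mu + L) / 2) • (a - b)
      = ((f' a - f' b) - mu • (a - b)) - ((L - mu) / 2) • (a - b) := by module
  have hsq : ‖(f' a - f' b) - ((mu + L) / 2) • (a - b)‖ ^ 2 ≤ ((L - mu) / 2 * ‖a - b‖) ^ 2 := by
    rw [hball, norm_sub_sq_real, real_inner_smul_right, norm_smul,
      Real.norm_of_nonneg (by linarith : 0 ≤ (L - mu) / 2)]
    nlinarith
  exact (pow_le_pow_iff_left₀ (norm_nonneg _) (by nlinarith [norm_nonneg (a - b)])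
    two_ne_zero).1 hsq

lemma norm_gradient_step_sub_le {f : E → ℝ} {f' : E → E} {mu L lam : ℝ} (hmuL : mu ≤ L)
    (hstrong : ConvexOn ℝ univ (fun x => f x - mu / 2 * ‖x‖ ^ 2))
    (hdiff : ∀ x, HasGradientAt f (f' x) x) (hlip : ∀ x y, ‖f' x - f' y‖ ≤ L * ‖x - y‖)
    (hlam : 0 ≤ lam) (a b : E) :
    ‖(a - lam • f' a) - (b - lam • f' b)‖ ≤ max |1 - lam * L| |1 - lam * mu| * ‖a - b‖ := by
  have hstep : (a - lam • f' a) - (b - lam • f' b) = (a - b) - lam • (f' a - f' b) := by module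
  rw [hstep]
  exact (norm_sub_smul_le_of_norm_sub_smul_le hlam
    (norm_gradient_sub_sub_smul_le hmuL hstrong hdiff hlip a b)).trans
    (by gcongr; exact abs_one_sub_mul_add_le_max lam mu L)

end InnerProductSpace

theorem prox_grad_linear_convergence_general
    {E : Type*} [NormedAddCommGroup E] [InnerProductSpace ℝ E] [CompleteSpace E]
    (f g : E → ℝ) (f' : E → E) (mu L lam : ℝ)
    (hmu : 0 < mu) (hL : 0 < L) (hmuL : mu ≤ L)
    (hstrong : ConvexOn ℝ Set.univ (fun x => f x - (mu / 2) * ‖x‖ ^ 2))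
    (hdiff : ∀ x : E, HasGradientAt f (f' x) x)
    (hlip : ∀ x y : E, ‖f' x - f' y‖ ≤ L * ‖x - y‖)
    (hg : ConvexOn ℝ Set.univ g)
    (hlam : lam ∈ Set.Ioo 0 (2 / L))
    (xstar : E) (hmin : ∀ z : E, f xstar + g xstar ≤ f z + g z)
    (x : ℕ → E)
    (hiter : ∀ (k : ℕ) (z : E),
      g (x (k + 1)) + (1 / (2 * lam)) * ‖x (k + 1) - (x k - lam • f' (x k))‖ ^ 2
        ≤ g z + (1 / (2 * lam)) * ‖z - (x k - lam • f' (x k))‖ ^ 2) :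
    max |1 - lam * L| |1 - lam * mu| < 1 ∧
      ∀ k : ℕ, ‖x k - xstar‖ ≤ (max |1 - lam * L| |1 - lam * mu|) ^ k * ‖x 0 - xstar‖ := by
  obtain ⟨hlam0, hlam2⟩ := hlam
  have hlamL : lam * L < 2 := (lt_div_iff₀ hL).1 hlam2
  refine ⟨max_abs_one_sub_mul_lt_one hmu hmuL hlam0 hlamL, fun k => ?_⟩
  have hscale : 0 < 2 * (1 / (2 * lam)) := by positivity
  -- `xstar` is a fixed point of the proximal gradient step.
  have hstar : ∀ z, g xstar ≤ g z
      + ⟪(2 * (1 / (2 * lam))) • (xstar - (xstar - lam • f' xstar)), z - xstar⟫ := by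
    rw [sub_sub_cancel, smul_smul, show 2 * (1 / (2 * lam)) * lam = 1 by field_simp, one_smul]
    exact hg.le_add_inner_of_forall_add_le (hdiff xstar) hmin
  have hprox : ∀ j, ‖x (j + 1) - xstar‖ ≤ ‖(x j - lam • f' (x j)) - (xstar - lam • f' xstar)‖ :=
    fun j => norm_sub_le_of_le_add_inner hscale
      (hg.le_add_inner_of_forall_add_le (hasGradientAt_const_mul_norm_sub_sq _ _ _)
        fun z => by linarith [hiter j z]) hstar
  exact le_geom (u := fun j => ‖x j - xstar‖) (le_max_of_le_left (abs_nonneg _)) k fun j _ =>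
    (hprox j).trans (norm_gradient_step_sub_le hmuL hstrong hdiff hlip hlam0.le _ _)

/-- Linear convergence of proximal gradient descent for a strongly convex smooth term
plus a convex lower semicontinuous term. -/
theorem prox_grad_linear_convergence
    {E : Type*} [NormedAddCommGroup E] [InnerProductSpace ℝ E] [CompleteSpace E]
    (f g : E → ℝ) (f' : E → E) (mu L lam : ℝ)
    (hmu : 0 < mu) (hL : 0 < L) (hmuL : mu ≤ L)
    (hstrong : ConvexOn ℝ Set.univ (fun x => f x - (mu / 2) * ‖x‖ ^ 2))
    (hdiff : ∀ x : E, HasGradientAt f (f' x) x)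
    (hlip : ∀ x y : E, ‖f' x - f' y‖ ≤ L * ‖x - y‖)
    (hg : ConvexOn ℝ Set.univ g) (hglsc : LowerSemicontinuous g)
    (hlam : lam ∈ Set.Ioo 0 (2 / L))
    (xstar : E) (hmin : ∀ z : E, f xstar + g xstar ≤ f z + g z)
    (x : ℕ → E)
    (hiter : ∀ (k : ℕ) (z : E),
      g (x (k + 1)) + (1 / (2 * lam)) * ‖x (k + 1) - (x k - lam • f' (x k))‖ ^ 2
        ≤ g z + (1 / (2 * lam)) * ‖z - (x k - lam • f' (x k))‖ ^ 2) :
    max |1 - lam * L| |1 - lam * mu| < 1 ∧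
      ∀ k : ℕ, ‖x k - xstar‖ ≤ (max |1 - lam * L| |1 - lam * mu|) ^ k * ‖x 0 - xstar‖ :=
  prox_grad_linear_convergence_general f g f' mu L lam hmu hL hmuL hstrong hdiff hlip hg hlam xstar
    hmin x hiter
end

section
/- Let E be a real Hilbert space, f : E → ℝ convex and differentiable, g : E → ℝ convex and lower semicontinuous, and λ > 0. A point x* ∈ E is a minimizer of f + g if and only if x* is a fixed point of the proximal gradient map, i.e., x* minimizes z ↦ g(z) + (1/(2λ))‖z − (x* − λ∇f(x*))‖². -/
open scoped RealInnerProductSpace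
open Filter Topology Set

/-!
Both sides are first-order optimality conditions of the same shape. For convex `φ`
differentiable at `x` and convex `g`, the point `x` minimizes `φ + g` iff
`g x ≤ g z + Dφ(x)(z - x)` for all `z`: one direction is the gradient inequality for `φ`,
the other compares difference quotients along the segment from `x` to `z`. Taking `φ = f`,
and then `φ = (2λ)⁻¹‖· - (x - λ∇f(x))‖²`, whose gradient at `x` is again `∇f(x)`, gives the
same condition twice.
-/

section Convex

variable {E : Type*} [NormedAddCommGroup E] [NormedSpace ℝ E] {φ g : E → ℝ} {φ' : E →L[ℝ] ℝ}
  {x : E}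

theorem ConvexOn.sub_le_mul_sub (hφ : ConvexOn ℝ univ φ) (z : E) {t : ℝ} (ht₀ : 0 ≤ t)
    (ht₁ : t ≤ 1) : φ (x + t • (z - x)) - φ x ≤ t * (φ z - φ x) := by
  have hcomb := hφ.2 (mem_univ x) (mem_univ z) (sub_nonneg.2 ht₁) ht₀ (by ring)
  rw [show (1 - t) • x + t • z = x + t • (z - x) by module, smul_eq_mul, smul_eq_mul] at hcomb
  linarith

theorem HasFDerivAt.tendsto_slope_segment (hφx : HasFDerivAt φ φ' x) (z : E) :
    Tendsto (fun t : ℝ => t⁻¹ * (φ (x + t • (z - x)) - φ x)) (𝓝[>] 0) (𝓝 (φ' (z - x))) :=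
  (hφx.hasLineDerivAt (z - x)).tendsto_slope_zero_right

theorem ConvexOn.apply_sub_le_of_hasFDerivAt (hφ : ConvexOn ℝ univ φ) (hφx : HasFDerivAt φ φ' x)
    (z : E) : φ' (z - x) ≤ φ z - φ x := by
  refine le_of_tendsto (hφx.tendsto_slope_segment z) ?_
  filter_upwards [Ioc_mem_nhdsGT one_pos] with t ⟨ht₀, ht₁⟩
  rw [inv_mul_le_iff₀ ht₀]
  exact hφ.sub_le_mul_sub z ht₀.le ht₁

theorem ConvexOn.isMinOn_add_iff (hφ : ConvexOn ℝ univ φ) (hφx : HasFDerivAt φ φ' x)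
    (hg : ConvexOn ℝ univ g) : IsMinOn (φ + g) univ x ↔ ∀ z, g x ≤ g z + φ' (z - x) := by
  rw [isMinOn_univ_iff]
  constructor
  · intro hmin z
    suffices g x - g z ≤ φ' (z - x) by linarith
    refine ge_of_tendsto (hφx.tendsto_slope_segment z) ?_
    filter_upwards [Ioc_mem_nhdsGT one_pos] with t ⟨ht₀, ht₁⟩
    rw [le_inv_mul_iff₀ ht₀]
    have hmin_t := hmin (x + t • (z - x))
    have hg_t := hg.sub_le_mul_sub (x := x) z ht₀.le ht₁
    simp only [Pi.add_apply] at hmin_t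
    linarith
  · intro hopt z
    have hφ_grad := hφ.apply_sub_le_of_hasFDerivAt hφx z
    simp only [Pi.add_apply]
    linarith [hopt z]

end Convex

section Quadratic

variable {E : Type*} [NormedAddCommGroup E] [InnerProductSpace ℝ E] {c : ℝ} {v : E}

theorem convexOn_mul_norm_sub_sq (hc : 0 ≤ c) :
    ConvexOn ℝ univ fun z : E => c * ‖z - v‖ ^ 2 := by
  have hsq := (convexOn_univ_dist v).pow (fun _ _ => dist_nonneg) 2
  simpa only [dist_eq_norm, smul_eq_mul, Pi.pow_apply] using hsq.smul hc

theorem hasGradientAt_mul_norm_sub_sq [CompleteSpace E] (x : E) :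
    HasGradientAt (fun z : E => c * ‖z - v‖ ^ 2) ((2 * c) • (x - v)) x := by
  rw [hasGradientAt_iff_hasFDerivAt]
  refine ((hasFDerivAt_sub_const v).norm_sq.const_mul c).congr_fderiv ?_
  ext d
  simp only [ContinuousLinearMap.comp_id, smul_apply, coe_innerSL_apply,
    nsmul_eq_mul, Nat.cast_ofNat, smul_eq_mul, map_smul, InnerProductSpace.toDual_apply_apply]
  ring

end Quadratic

theorem minimizer_iff_fixedPoint_prox_grad_general
    {E : Type*} [NormedAddCommGroup E] [InnerProductSpace ℝ E] [CompleteSpace E]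
    (f g : E → ℝ) (f' : E → E) (lam : ℝ) (hlam : 0 < lam)
    (hf : ConvexOn ℝ Set.univ f)
    (hdiff : ∀ x : E, HasGradientAt f (f' x) x)
    (hg : ConvexOn ℝ Set.univ g)
    (xstar : E) :
    (∀ z : E, f xstar + g xstar ≤ f z + g z) ↔
      (∀ z : E,
        g xstar + (1 / (2 * lam)) * ‖xstar - (xstar - lam • f' xstar)‖ ^ 2
          ≤ g z + (1 / (2 * lam)) * ‖z - (xstar - lam • f' xstar)‖ ^ 2) := by
  set q : E → ℝ := fun z => (1 / (2 * lam)) * ‖z - (xstar - lam • f' xstar)‖ ^ 2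
  have hq_grad : HasGradientAt q (f' xstar) xstar := by
    convert hasGradientAt_mul_norm_sub_sq xstar using 1
    rw [sub_sub_cancel, smul_smul, show 2 * (1 / (2 * lam)) * lam = 1 by field_simp, one_smul]
  have hq_convex : ConvexOn ℝ univ q := convexOn_mul_norm_sub_sq (by positivity)
  calc (∀ z, f xstar + g xstar ≤ f z + g z)
      ↔ IsMinOn (f + g) univ xstar := by simp only [isMinOn_univ_iff, Pi.add_apply]
    _ ↔ IsMinOn (q + g) univ xstar := by
      rw [hf.isMinOn_add_iff (hdiff xstar).hasFDerivAt hg,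
        hq_convex.isMinOn_add_iff hq_grad.hasFDerivAt hg]
    _ ↔ ∀ z, g xstar + q xstar ≤ g z + q z := by
      simp only [isMinOn_univ_iff, Pi.add_apply, add_comm (q _)]

/-- A point minimizes `f + g` iff it is a fixed point of the proximal gradient map
`x ↦ prox_{λg}(x - λ∇f(x))`. -/
theorem minimizer_iff_fixedPoint_prox_grad
    {E : Type*} [NormedAddCommGroup E] [InnerProductSpace ℝ E] [CompleteSpace E]
    (f g : E → ℝ) (f' : E → E) (lam : ℝ) (hlam : 0 < lam)
    (hf : ConvexOn ℝ Set.univ f)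
    (hdiff : ∀ x : E, HasGradientAt f (f' x) x)
    (hg : ConvexOn ℝ Set.univ g) (hglsc : LowerSemicontinuous g)
    (xstar : E) :
    (∀ z : E, f xstar + g xstar ≤ f z + g z) ↔
      (∀ z : E,
        g xstar + (1 / (2 * lam)) * ‖xstar - (xstar - lam • f' xstar)‖ ^ 2
          ≤ g z + (1 / (2 * lam)) * ‖z - (xstar - lam • f' xstar)‖ ^ 2) :=
  minimizer_iff_fixedPoint_prox_grad_general f g f' lam hlam hf hdiff hg xstar
end

section
/- (Objective convergence of PnP iterations with gradient-step denoisers) Let E be a real Hilbert space, f : E → ℝ convex and lower semicontinuous, g : E → ℝ differentiable with L-Lipschitz gradient, λ > 0, and τ ∈ (0, 1/(λL)). Assume F := f + λg is bounded below. Define the iterates x_{k+1} = prox_{τf}(x_k − τλ∇g(x_k)), i.e., x_{k+1} minimizes z ↦ f(z) + (1/(2τ))‖z − (x_k − τλ∇g(x_k))‖². Then: (i) the sequence F(x_k) is nonincreasing and convergent; (ii) ‖x_{k+1} − x_k‖ → 0 as k → ∞; (iii) every cluster point x̄ of (x_k) is a stationary point of F, in the sense that −λ∇g(x̄) is a subgradient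 of f at x̄. -/
/-!
The step is a proximal step for `f` taken after a gradient step for `λ g`. Testing the prox
inequality at `z = x k` and adding the descent lemma for `λ g` (whose gradient is `λL`-Lipschitz)
gives the sufficient decrease
`F (x (k+1)) + (1 / (2τ) - λL / 2) ‖x (k+1) - x k‖² ≤ F (x k)`, whence (i) and, as `F` is bounded
below, (ii). Along a subsequence converging to `x̄`, the prox inequality passes to the limit by
lower semicontinuity of `f`, so `x̄` is a fixed point of the step. For convex `f`, moving `z`
towards `x̄` makes the quadratic term of the fixed-point inequality negligible, which leaves the
subgradient inequality.
-/

open Filter Topology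
open scoped RealInnerProductSpace

section Normed

variable {E : Type*} [NormedAddCommGroup E]

def IsProxPoint (f : E → ℝ) (τ : ℝ) (y p : E) : Prop :=
  ∀ z, f p + 1 / (2 * τ) * ‖p - y‖ ^ 2 ≤ f z + 1 / (2 * τ) * ‖z - y‖ ^ 2

theorem IsProxPoint.of_tendsto {f : E → ℝ} {τ : ℝ} {ι : Type*} {l : Filter ι} [l.NeBot]
    {u v : ι → E} {y p : E}
    (hf : LowerSemicontinuous f) (hu : Tendsto u l (𝓝 y)) (hv : Tendsto v l (𝓝 p))
    (hprox : ∀ i, IsProxPoint f τ (u i) (v i)) : IsProxPoint f τ y p := by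
  intro z
  have hlim : Tendsto (fun i => f z + 1 / (2 * τ) * ‖z - u i‖ ^ 2 - 1 / (2 * τ) * ‖v i - u i‖ ^ 2)
      l (𝓝 (f z + 1 / (2 * τ) * ‖z - y‖ ^ 2 - 1 / (2 * τ) * ‖p - y‖ ^ 2)) :=
    (tendsto_const_nhds.add (((tendsto_const_nhds.sub hu).norm.pow 2).const_mul _)).sub
      (((hv.sub hu).norm.pow 2).const_mul _)
  have hfp : f p ≤ f z + 1 / (2 * τ) * ‖z - y‖ ^ 2 - 1 / (2 * τ) * ‖p - y‖ ^ 2 := by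
    refine le_of_forall_lt_imp_le_of_dense fun r hr => ge_of_tendsto hlim ?_
    filter_upwards [hv.eventually (hf p r hr)] with i hi
    linarith [hprox i z]
  linarith

variable [NormedSpace ℝ E]

def IsProxGradSeq (f : E → ℝ) (h' : E → E) (τ : ℝ) (x : ℕ → E) : Prop :=
  ∀ k, IsProxPoint f τ (x k - τ • h' (x k)) (x (k + 1))

theorem IsProxGradSeq.isProxPoint_of_mapClusterPt {f : E → ℝ} {h' : E → E} {τ : ℝ} {x : ℕ → E}
    (hseq : IsProxGradSeq f h' τ x) (hf : LowerSemicontinuous f) (hh' : Continuous h')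
    (hres : Tendsto (fun k => ‖x (k + 1) - x k‖) atTop (𝓝 0)) {a : E}
    (hcl : MapClusterPt a atTop x) : IsProxPoint f τ (a - τ • h' a) a := by
  obtain ⟨φ, hφ_mono, hφ⟩ := hcl.tendsto_subseq
  have hstep : Tendsto (fun j => x (φ j + 1) - x (φ j)) atTop (𝓝 0) :=
    tendsto_zero_iff_norm_tendsto_zero.2 (hres.comp hφ_mono.tendsto_atTop)
  have hnext : Tendsto (fun j => x (φ j + 1)) atTop (𝓝 a) := by
    simpa using hφ.add hstep
  exact IsProxPoint.of_tendsto hf (hφ.sub (((hh'.tendsto a).comp hφ).const_smul τ)) hnext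
    fun j => hseq (φ j)

end Normed

section Inner

variable {E : Type*} [NormedAddCommGroup E] [InnerProductSpace ℝ E]

theorem IsProxPoint.add_inner_le {f : E → ℝ} {τ : ℝ} {x v p : E}
    (hprox : IsProxPoint f τ (x - τ • v) p) (hτ : 0 < τ) (z : E) :
    f p + 1 / (2 * τ) * ‖p - x‖ ^ 2 + ⟪v, p - x⟫
      ≤ f z + 1 / (2 * τ) * ‖z - x‖ ^ 2 + ⟪v, z - x⟫ := by
  have hexpand : ∀ w : E, 1 / (2 * τ) * ‖w - (x - τ • v)‖ ^ 2
      = 1 / (2 * τ) * ‖w - x‖ ^ 2 + ⟪v, w - x⟫ + τ / 2 * ‖v‖ ^ 2 := by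
    intro w
    rw [show w - (x - τ • v) = (w - x) + τ • v by abel, norm_add_sq_real, norm_smul,
      real_inner_smul_right, real_inner_comm, Real.norm_of_nonneg hτ.le]
    field_simp
  have := hprox z
  rw [hexpand, hexpand] at this
  linarith

theorem ConvexOn.le_add_inner_of_le_add_inner_add_sq {f : E → ℝ} (hf : ConvexOn ℝ Set.univ f)
    {a v : E} {C : ℝ} (h : ∀ z, f a ≤ f z + ⟪v, z - a⟫ + C * ‖z - a‖ ^ 2) (z : E) :
    f a ≤ f z + ⟪v, z - a⟫ := by
  have hsmall : ∀ t ∈ Set.Ioo (0 : ℝ) 1, f a ≤ f z + ⟪v, z - a⟫ + t * (C * ‖z - a‖ ^ 2) := by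
    rintro t ⟨ht0, ht1⟩
    have hconv : f (a + t • (z - a)) ≤ (1 - t) * f a + t * f z := by
      rw [show a + t • (z - a) = (1 - t) • a + t • z by module]
      exact hf.2 (Set.mem_univ a) (Set.mem_univ z) (by linarith) ht0.le (by ring)
    have hquad := h (a + t • (z - a))
    rw [add_sub_cancel_left, real_inner_smul_right, norm_smul, Real.norm_of_nonneg ht0.le] at hquad
    have : t * f a ≤ t * (f z + ⟪v, z - a⟫ + t * (C * ‖z - a‖ ^ 2)) := by nlinarith
    exact le_of_mul_le_mul_left this ht0
  have hlim : Tendsto (fun t : ℝ => f z + ⟪v, z - a⟫ + t * (C * ‖z - a‖ ^ 2)) (𝓝[>] 0)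
      (𝓝 (f z + ⟪v, z - a⟫)) := by
    simpa using (tendsto_const_nhds.add (tendsto_id.mul_const (C * ‖z - a‖ ^ 2))).mono_left
      (nhdsWithin_le_nhds (a := (0 : ℝ)))
  exact ge_of_tendsto hlim (mem_of_superset (Ioo_mem_nhdsGT zero_lt_one) hsmall)

theorem IsProxPoint.le_add_inner_neg {f : E → ℝ} {τ : ℝ} {a v : E}
    (hprox : IsProxPoint f τ (a - τ • v) a) (hf : ConvexOn ℝ Set.univ f) (hτ : 0 < τ) (z : E) :
    f a + ⟪-v, z - a⟫ ≤ f z := by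
  have hquad : ∀ z, f a ≤ f z + ⟪v, z - a⟫ + 1 / (2 * τ) * ‖z - a‖ ^ 2 := fun z => by
    have := hprox.add_inner_le hτ z
    simp only [sub_self, norm_zero, inner_zero_right] at this
    linarith
  rw [inner_neg_left]
  linarith [hf.le_add_inner_of_le_add_inner_add_sq hquad z]

variable [CompleteSpace E]

theorem HasGradientAt.const_mul {g : E → ℝ} {g' x : E} (hg : HasGradientAt g g' x) (c : ℝ) :
    HasGradientAt (fun y => c * g y) (c • g') x := by
  rw [hasGradientAt_iff_hasFDerivAt, map_smulₛₗ, RCLike.conj_to_real]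
  exact hg.hasFDerivAt.const_mul c

theorem le_add_inner_add_sq_of_gradient_lipschitz {g : E → ℝ} {g' : E → E} {L : ℝ}
    (hg : ∀ x, HasGradientAt g (g' x) x) (hlip : ∀ x y, ‖g' x - g' y‖ ≤ L * ‖x - y‖) (x y : E) :
    g y ≤ g x + ⟪g' x, y - x⟫ + L / 2 * ‖y - x‖ ^ 2 := by
  set d := y - x
  have hline : ∀ t : ℝ, HasDerivAt (fun t : ℝ => g (x + t • d)) ⟪g' (x + t • d), d⟫ t := by
    intro t
    have hcurve : HasDerivAt (fun t : ℝ => x + t • d) d t := by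
      simpa using ((hasDerivAt_id t).smul_const d).const_add x
    simpa [InnerProductSpace.toDual_apply_apply, Function.comp_def] using
      (hg (x + t • d)).hasFDerivAt.comp_hasDerivAt t hcurve
  have hbound : ∀ t : ℝ, HasDerivAt (fun t : ℝ => g x + t * ⟪g' x, d⟫ + L / 2 * t ^ 2 * ‖d‖ ^ 2)
      (⟪g' x, d⟫ + L * t * ‖d‖ ^ 2) t := by
    intro t
    refine ((((hasDerivAt_id t).mul_const ⟪g' x, d⟫).const_add (g x)).add
      (((hasDerivAt_pow 2 t).const_mul (L / 2)).mul_const (‖d‖ ^ 2))).congr_deriv ?_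
    simp only [one_mul]; push_cast; ring
  have key := image_le_of_deriv_right_le_deriv_boundary (a := 0) (b := 1)
    (fun t _ => (hline t).continuousAt.continuousWithinAt)
    (fun t _ => (hline t).hasDerivWithinAt) (by simp)
    (fun t _ => (hbound t).continuousAt.continuousWithinAt)
    (fun t _ => (hbound t).hasDerivWithinAt) ?_ (Set.right_mem_Icc.2 zero_le_one)
  · simpa [d] using key
  intro t ht
  calc ⟪g' (x + t • d), d⟫ = ⟪g' x, d⟫ + ⟪g' (x + t • d) - g' x, d⟫ := by
        rw [inner_sub_left]; ring
    _ ≤ ⟪g' x, d⟫ + L * ‖t • d‖ * ‖d‖ := by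
        gcongr
        exact (real_inner_le_norm _ _).trans (mul_le_mul_of_nonneg_right
          (by simpa using hlip (x + t • d) x) (norm_nonneg d))
    _ = ⟪g' x, d⟫ + L * t * ‖d‖ ^ 2 := by
        rw [norm_smul, Real.norm_of_nonneg ht.1]; ring

theorem IsProxPoint.sufficient_decrease {f h : E → ℝ} {h' : E → E} {L τ : ℝ} {x p : E}
    (hprox : IsProxPoint f τ (x - τ • h' x) p) (hh : ∀ x, HasGradientAt h (h' x) x)
    (hlip : ∀ x y, ‖h' x - h' y‖ ≤ L * ‖x - y‖) (hτ : 0 < τ) :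
    f p + h p + (1 / (2 * τ) - L / 2) * ‖p - x‖ ^ 2 ≤ f x + h x := by
  have hprox_x := hprox.add_inner_le hτ x
  simp only [sub_self, norm_zero, inner_zero_right] at hprox_x
  linarith [le_add_inner_add_sq_of_gradient_lipschitz hh hlip x p]

namespace IsProxGradSeq

variable {f h : E → ℝ} {h' : E → E} {L τ : ℝ} {x : ℕ → E}

theorem antitone (hseq : IsProxGradSeq f h' τ x) (hh : ∀ x, HasGradientAt h (h' x) x)
    (hlip : ∀ x y, ‖h' x - h' y‖ ≤ L * ‖x - y‖) (hτ : 0 < τ) (hτL : τ * L ≤ 1) :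
    Antitone fun k => f (x k) + h (x k) := by
  have hc : 0 ≤ 1 / (2 * τ) - L / 2 := by
    rw [sub_nonneg, le_div_iff₀ (by positivity)]
    linarith
  refine antitone_nat_of_succ_le fun k => ?_
  linarith [(hseq k).sufficient_decrease hh hlip hτ,
    mul_nonneg hc (sq_nonneg ‖x (k + 1) - x k‖)]

theorem tendsto_norm_sub (hseq : IsProxGradSeq f h' τ x) (hh : ∀ x, HasGradientAt h (h' x) x)
    (hlip : ∀ x y, ‖h' x - h' y‖ ≤ L * ‖x - y‖) (hτ : 0 < τ) (hτL : τ * L < 1)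
    (hbdd : BddBelow (Set.range fun k => f (x k) + h (x k))) :
    Tendsto (fun k => ‖x (k + 1) - x k‖) atTop (𝓝 0) := by
  have hdec := fun k => (hseq k).sufficient_decrease hh hlip hτ
  set c := 1 / (2 * τ) - L / 2
  have hc : 0 < c := by
    rw [sub_pos, lt_div_iff₀ (by positivity)]
    linarith
  have hF := tendsto_atTop_ciInf (hseq.antitone hh hlip hτ hτL.le) hbdd
  have hgap : Tendsto (fun k => (f (x k) + h (x k) - (f (x (k + 1)) + h (x (k + 1)))) / c)
      atTop (𝓝 0) := by
    simpa using (hF.sub (hF.comp (tendsto_add_atTop_nat 1))).div_const c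
  have hsq : Tendsto (fun k => ‖x (k + 1) - x k‖ ^ 2) atTop (𝓝 0) := by
    refine squeeze_zero (fun k => sq_nonneg _) (fun k => ?_) hgap
    rw [le_div_iff₀ hc]
    linarith [hdec k]
  simpa [Real.sqrt_sq (norm_nonneg _)] using hsq.sqrt

end IsProxGradSeq

end Inner

theorem pnp_gradient_step_objective_convergence_general
    {E : Type*} [NormedAddCommGroup E] [InnerProductSpace ℝ E] [CompleteSpace E]
    (f g : E → ℝ) (g' : E → E) (L lam τ : ℝ) (hlam : 0 < lam)
    (hf : ConvexOn ℝ Set.univ f) (hflsc : LowerSemicontinuous f)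
    (hdiff : ∀ x : E, HasGradientAt g (g' x) x)
    (hlip : ∀ x y : E, ‖g' x - g' y‖ ≤ L * ‖x - y‖)
    (hτ : τ ∈ Set.Ioo 0 (1 / (lam * L)))
    (hbdd : ∃ B : ℝ, ∀ z : E, B ≤ f z + lam * g z)
    (x : ℕ → E)
    (hiter : ∀ (k : ℕ) (z : E),
      f (x (k + 1)) + (1 / (2 * τ)) * ‖x (k + 1) - (x k - (τ * lam) • g' (x k))‖ ^ 2
        ≤ f z + (1 / (2 * τ)) * ‖z - (x k - (τ * lam) • g' (x k))‖ ^ 2) :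
    (Antitone (fun k : ℕ => f (x k) + lam * g (x k)) ∧
      ∃ ℓ : ℝ, Tendsto (fun k : ℕ => f (x k) + lam * g (x k)) atTop (𝓝 ℓ)) ∧
    Tendsto (fun k : ℕ => ‖x (k + 1) - x k‖) atTop (𝓝 0) ∧
    ∀ xbar : E, MapClusterPt xbar atTop x →
      ∀ z : E, f xbar + ⟪-(lam • g' xbar), z - xbar⟫ ≤ f z := by
  obtain ⟨hτ0, hτ1⟩ := hτ
  have hτL : τ * (lam * L) < 1 := (lt_div_iff₀ (one_div_pos.1 (hτ0.trans hτ1))).1 hτ1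
  have hgrad : ∀ y, HasGradientAt (fun y => lam * g y) (lam • g' y) y :=
    fun y => (hdiff y).const_mul lam
  have hlip' : ∀ y z, ‖lam • g' y - lam • g' z‖ ≤ lam * L * ‖y - z‖ := fun y z => by
    rw [← smul_sub, norm_smul, Real.norm_of_nonneg hlam.le, mul_assoc]
    exact mul_le_mul_of_nonneg_left (hlip y z) hlam.le
  have hcont : Continuous fun y => lam • g' y :=
    (LipschitzWith.of_dist_le' (K := L) (by simpa only [dist_eq_norm] using hlip)).continuous
      |>.const_smul lam
  have hseq : IsProxGradSeq f (fun y => lam • g' y) τ x := fun k => by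
    simpa only [IsProxPoint, mul_smul] using hiter k
  obtain ⟨B, hB⟩ := hbdd
  have hbdd' : BddBelow (Set.range fun k => f (x k) + lam * g (x k)) :=
    ⟨B, by rintro _ ⟨k, rfl⟩; exact hB (x k)⟩
  have hanti := hseq.antitone hgrad hlip' hτ0 hτL.le
  have hres := hseq.tendsto_norm_sub hgrad hlip' hτ0 hτL hbdd'
  exact ⟨⟨hanti, _, tendsto_atTop_ciInf hanti hbdd'⟩, hres, fun xbar hcl z =>
    (hseq.isProxPoint_of_mapClusterPt hflsc hcont hres hcl).le_add_inner_neg hf hτ0 z⟩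

/-- Objective convergence of PnP iterations with a gradient-step denoiser
`D = id - ∇g` (Hurault et al.): the iterates of
`x_{k+1} = prox_{τf}(x_k - τλ∇g(x_k))` have nonincreasing convergent objective values
`F(x_k)`, vanishing residuals, and all cluster points are stationary points of
`F = f + λ g`. -/
theorem pnp_gradient_step_objective_convergence
    {E : Type*} [NormedAddCommGroup E] [InnerProductSpace ℝ E] [CompleteSpace E]
    (f g : E → ℝ) (g' : E → E) (L lam τ : ℝ) (hL : 0 < L) (hlam : 0 < lam)
    (hf : ConvexOn ℝ Set.univ f) (hflsc : LowerSemicontinuous f)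
    (hdiff : ∀ x : E, HasGradientAt g (g' x) x)
    (hlip : ∀ x y : E, ‖g' x - g' y‖ ≤ L * ‖x - y‖)
    (hτ : τ ∈ Set.Ioo 0 (1 / (lam * L)))
    (hbdd : ∃ B : ℝ, ∀ z : E, B ≤ f z + lam * g z)
    (x : ℕ → E)
    (hiter : ∀ (k : ℕ) (z : E),
      f (x (k + 1)) + (1 / (2 * τ)) * ‖x (k + 1) - (x k - (τ * lam) • g' (x k))‖ ^ 2
        ≤ f z + (1 / (2 * τ)) * ‖z - (x k - (τ * lam) • g' (x k))‖ ^ 2) :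
    (Antitone (fun k : ℕ => f (x k) + lam * g (x k)) ∧
      ∃ ℓ : ℝ, Tendsto (fun k : ℕ => f (x k) + lam * g (x k)) atTop (𝓝 ℓ)) ∧
    Tendsto (fun k : ℕ => ‖x (k + 1) - x k‖) atTop (𝓝 0) ∧
    ∀ xbar : E, MapClusterPt xbar atTop x →
      ∀ z : E, f xbar + ⟪-(lam • g' xbar), z - xbar⟫ ≤ f z :=
  pnp_gradient_step_objective_convergence_general f g g' L lam τ hlam hf hflsc hdiff hlip hτ hbdd x
    hiter
end

section
/- (Fixed-point convergence of PnP-DRSdiff, Ryu et al.) Let E be a real Hilbert space, τ > 0, and f : E → ℝ be μ-strongly convex (μ > 0) and lower semicontinuous; let P : E → E denote the proximal operator of τf, i.e., P(v) is the unique minimizer of z ↦ f(z) + (1/(2τ))‖z − v‖². Let D : E → E be a map whose residual D − id is ε-Lipschitz for some ε ∈ (0,1): ‖(D − id)(u) − (D − id)(v)‖ ≤ ε‖u − v‖ for all u, v. Assume ε/((1 + ε − 2ε²)μ) < τ. Define T := (1/2)·id + (1/2)·(2D − id)∘(2P − id). Then T is a contraction, i.e., there exists ρ < 1 such that T is ρ-Lipschitz;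 consequently T has a unique fixed point x*, and for any initialization x₀ the iterates x_{k+1} = T(x_k) converge to x*. -/
/-!
Put `s = τμ`, `p = P x - P y`, `u = x - y`. The prox objective is `(μ + 1/τ)`-strongly convex, so
`P` is `(1 + s)`-cocoercive: `(1 + s)‖p‖² ≤ ⟪u, p⟫`, whence `(1 + s)‖p‖ ≤ ‖u‖` and
`‖2p - u‖² ≤ ‖u‖² - 4s‖p‖²`. As `T = P + (D - id) ∘ (2P - id)`, we get
`‖T x - T y‖ ≤ ‖p‖ + ε‖2p - u‖ ≤ ε‖u‖ + ‖p‖ - 2εs‖p‖²/‖u‖`, so `T` is a contraction as soon as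
the concave quadratic `a - 2εs a²` stays below `1 - ε` on `0 ≤ a ≤ 1/(1 + s)`; this is what the
step-size condition guarantees. Banach's fixed point theorem does the rest.
-/

open Filter Topology Set
open scoped RealInnerProductSpace

section StrongConvexity

variable {E : Type*} [NormedAddCommGroup E]

lemma StrongConvexOn.add_sq_norm_sub_le_of_isMinOn [NormedSpace ℝ E] {s : Set E} {m : ℝ}
    {f : E → ℝ} {x y : E} (hf : StrongConvexOn s m f) (hx : x ∈ s) (hmin : IsMinOn f s x)
    (hy : y ∈ s) : f x + m / 2 * ‖x - y‖ ^ 2 ≤ f y := by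
  have hseg : ∀ t ∈ Ioo (0 : ℝ) 1, f x + (1 - t) * (m / 2 * ‖x - y‖ ^ 2) ≤ f y := by
    rintro t ⟨ht0, ht1⟩
    have hmix := hf.2 hx hy (sub_nonneg.2 ht1.le) ht0.le (sub_add_cancel 1 t)
    have hle := isMinOn_iff.1 hmin _
      (hf.1 hx hy (sub_nonneg.2 ht1.le) ht0.le (sub_add_cancel 1 t))
    simp only [smul_eq_mul] at hmix
    refine le_of_mul_le_mul_left ?_ ht0
    linear_combination hle + hmix
  have hlim : Tendsto (fun t : ℝ => f x + (1 - t) * (m / 2 * ‖x - y‖ ^ 2)) (𝓝[>] 0)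
      (𝓝 (f x + m / 2 * ‖x - y‖ ^ 2)) := by
    have hcont : Continuous fun t : ℝ => f x + (1 - t) * (m / 2 * ‖x - y‖ ^ 2) := by fun_prop
    simpa using tendsto_nhdsWithin_of_tendsto_nhds (hcont.tendsto 0)
  exact le_of_tendsto hlim (eventually_of_mem (Ioo_mem_nhdsGT one_pos) hseg)

variable [InnerProductSpace ℝ E]

lemma StrongConvexOn.add_mul_norm_sub_sq {s : Set E} {m : ℝ} {f : E → ℝ}
    (hf : StrongConvexOn s m f) (c : ℝ) (v : E) :
    StrongConvexOn s (m + 2 * c) (fun z => f z + c * ‖z - v‖ ^ 2) := by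
  rw [strongConvexOn_iff_convex] at hf ⊢
  refine (hf.add ((((-(2 * c)) • innerₗ E v).convexOn hf.1).add_const (c * ‖v‖ ^ 2))).congr
    fun z _ => ?_
  simp only [Pi.add_apply, LinearMap.smul_apply, innerₗ_apply_apply, smul_eq_mul,
    norm_sub_sq_real, real_inner_comm z v]
  ring

end StrongConvexity

section Prox

variable {E : Type*} [NormedAddCommGroup E] [InnerProductSpace ℝ E]

lemma norm_sub_sq_add_norm_sub_sq_sub (x y p q : E) :
    ‖q - x‖ ^ 2 + ‖p - y‖ ^ 2 - ‖p - x‖ ^ 2 - ‖q - y‖ ^ 2 = 2 * ⟪x - y, p - q⟫ := by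
  simp only [norm_sub_sq_real, inner_sub_left, inner_sub_right, real_inner_comm x,
    real_inner_comm y]
  ring

lemma prox_cocoercive {f : E → ℝ} {P : E → E} {τ μ : ℝ} (hτ : 0 < τ)
    (hf : StrongConvexOn univ μ f)
    (hP : ∀ v z : E,
      f (P v) + (1 / (2 * τ)) * ‖P v - v‖ ^ 2 ≤ f z + (1 / (2 * τ)) * ‖z - v‖ ^ 2)
    (x y : E) : (1 + τ * μ) * ‖P x - P y‖ ^ 2 ≤ ⟪x - y, P x - P y⟫ := by
  have hgrowth : ∀ v z : E, f (P v) + (1 / (2 * τ)) * ‖P v - v‖ ^ 2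
      + (μ + 2 * (1 / (2 * τ))) / 2 * ‖P v - z‖ ^ 2 ≤ f z + (1 / (2 * τ)) * ‖z - v‖ ^ 2 :=
    fun v z => (hf.add_mul_norm_sub_sq (1 / (2 * τ)) v).add_sq_norm_sub_le_of_isMinOn
      (mem_univ _) (isMinOn_univ_iff.2 (hP v)) (mem_univ z)
  have hsum := add_le_add (hgrowth x (P y)) (hgrowth y (P x))
  have hid := norm_sub_sq_add_norm_sub_sq_sub x y (P x) (P y)
  rw [norm_sub_rev (P y) (P x)] at hsum
  field_simp at hsum
  linarith

lemma mul_norm_le_of_mul_norm_sq_le_inner {c : ℝ} {u p : E} (h : c * ‖p‖ ^ 2 ≤ ⟪u, p⟫) :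
    c * ‖p‖ ≤ ‖u‖ := by
  rcases (norm_nonneg p).eq_or_lt with hp | hp
  · simp [← hp]
  · refine le_of_mul_le_mul_right ?_ hp
    nlinarith [real_inner_le_norm u p]

lemma norm_two_smul_sub_sq_le {s : ℝ} {u p : E} (h : (1 + s) * ‖p‖ ^ 2 ≤ ⟪u, p⟫) :
    ‖(2 : ℝ) • p - u‖ ^ 2 ≤ ‖u‖ ^ 2 - 4 * s * ‖p‖ ^ 2 := by
  rw [norm_sub_sq_real, norm_smul, real_inner_smul_left, real_inner_comm, Real.norm_two]
  linear_combination 4 * h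

end Prox

section PnPDRS

variable {E : Type*} [NormedAddCommGroup E] [NormedSpace ℝ E]

lemma norm_pnpDRS_sub_le {P D T : E → E} {ε : ℝ}
    (hres : ∀ u v : E, ‖(D u - u) - (D v - v)‖ ≤ ε * ‖u - v‖)
    (hT : ∀ x : E, T x =
      (1 / 2 : ℝ) • x + (1 / 2 : ℝ) • ((2 : ℝ) • D ((2 : ℝ) • P x - x) - ((2 : ℝ) • P x - x)))
    (x y : E) : ‖T x - T y‖ ≤ ‖P x - P y‖ + ε * ‖(2 : ℝ) • (P x - P y) - (x - y)‖ := by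
  have hTP : ∀ x, T x = P x + (D ((2 : ℝ) • P x - x) - ((2 : ℝ) • P x - x)) := fun x => by
    rw [hT]; module
  have hreflect : ((2 : ℝ) • P x - x) - ((2 : ℝ) • P y - y) = (2 : ℝ) • (P x - P y) - (x - y) := by
    module
  calc ‖T x - T y‖
      = ‖(P x - P y) + ((D ((2 : ℝ) • P x - x) - ((2 : ℝ) • P x - x))
          - (D ((2 : ℝ) • P y - y) - ((2 : ℝ) • P y - y)))‖ := by
        rw [hTP, hTP]; congr 1; abel
    _ ≤ ‖P x - P y‖ + ‖(D ((2 : ℝ) • P x - x) - ((2 : ℝ) • P x - x))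
          - (D ((2 : ℝ) • P y - y) - ((2 : ℝ) • P y - y))‖ := norm_add_le _ _
    _ ≤ ‖P x - P y‖ + ε * ‖(2 : ℝ) • (P x - P y) - (x - y)‖ := by
        rw [← hreflect]; gcongr; exact hres _ _

end PnPDRS

section ScalarBound

variable {s ε : ℝ}

lemma mul_le_sq_sub_of_sq_le {a b d : ℝ} (h : b ^ 2 ≤ d ^ 2 - 4 * s * a ^ 2) :
    b * d ≤ d ^ 2 - 2 * s * a ^ 2 := by
  have hnonneg : 0 ≤ d ^ 2 - 2 * s * a ^ 2 := by nlinarith [sq_nonneg b, sq_nonneg (s * a ^ 2)]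
  have hsq : (b * d) ^ 2 ≤ (d ^ 2 - 2 * s * a ^ 2) ^ 2 := by
    nlinarith [mul_le_mul_of_nonneg_left h (sq_nonneg d), sq_nonneg (s * a ^ 2)]
  exact (abs_le_of_sq_le_sq' hsq hnonneg).2

lemma exists_sub_mul_sq_le (hs : 0 < s) (hε : ε ∈ Ioo (0 : ℝ) 1)
    (hsε : ε < s * (1 + ε - 2 * ε ^ 2)) :
    ∃ k, ε + k < 1 ∧
      ∀ a d : ℝ, 0 ≤ a → (1 + s) * a ≤ d → a * d - 2 * ε * s * a ^ 2 ≤ k * d ^ 2 := by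
  obtain ⟨hε0, hε1⟩ := hε
  rcases le_or_gt (4 * ε * s) (1 + s) with hcase | hcase
  · -- the vertex `a = d / (4εs)` lies beyond `d / (1 + s)`: take the value at `a = d / (1 + s)`
    refine ⟨(1 + s - 2 * ε * s) / (1 + s) ^ 2, ?_, fun a d ha had => ?_⟩
    · have hA : 0 < s * (1 + ε - 2 * ε ^ 2) - ε := by linarith
      have hquad : 0 < (1 - ε) * s ^ 2 + s - ε := by
        have hid : (1 + 2 * ε) * (1 + ε - 2 * ε ^ 2) * ((1 - ε) * s ^ 2 + s - ε)
            = ((1 + ε - 2 * ε ^ 2) * s + 1 + 3 * ε) * (s * (1 + ε - 2 * ε ^ 2) - ε)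
              + 4 * ε ^ 4 := by
          ring
        have h1 : 0 < 1 + ε - 2 * ε ^ 2 := by nlinarith
        have h2 : 0 < ((1 + ε - 2 * ε ^ 2) * s + 1 + 3 * ε) * (s * (1 + ε - 2 * ε ^ 2) - ε)
            + 4 * ε ^ 4 := by positivity
        exact pos_of_mul_pos_right (hid ▸ h2) (by positivity)
      rw [← lt_sub_iff_add_lt', div_lt_iff₀ (by positivity)]
      linear_combination hquad
    · have hfactor : 0 ≤ (d - (1 + s) * a) * ((1 + s) * d - 2 * ε * s * (d + (1 + s) * a)) := by
        have hd : 0 ≤ d := le_trans (by positivity) had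
        refine mul_nonneg (by linarith) ?_
        nlinarith [mul_le_mul_of_nonneg_left had (by positivity : (0 : ℝ) ≤ 2 * ε * s),
          mul_nonneg hd (sub_nonneg.2 hcase)]
      rw [div_mul_eq_mul_div, le_div_iff₀ (by positivity)]
      linear_combination hfactor
  · -- the value at the vertex
    refine ⟨1 / (8 * ε * s), ?_, fun a d _ _ => ?_⟩
    · have hkey : 1 < 8 * ε * s * (1 - ε) := by
        rcases le_or_gt ε (1 / 2) with h | h
        · nlinarith [mul_nonneg hs.le (by nlinarith : (0 : ℝ) ≤ 4 * ε - 8 * ε ^ 2)]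
        · nlinarith [mul_lt_mul_of_pos_left hsε (by positivity : (0 : ℝ) < 8 * ε),
            mul_nonneg (by linarith : (0 : ℝ) ≤ 4 * ε + 1) (by linarith : (0 : ℝ) ≤ 2 * ε - 1)]
      rw [← lt_sub_iff_add_lt', div_lt_iff₀ (by positivity)]
      linarith
    · rw [div_mul_eq_mul_div, one_mul, le_div_iff₀ (by positivity)]
      nlinarith [sq_nonneg (4 * ε * s * a - d)]

lemma exists_add_mul_le (hs : 0 < s) (hε : ε ∈ Ioo (0 : ℝ) 1)
    (hsε : ε < s * (1 + ε - 2 * ε ^ 2)) :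
    ∃ ρ, 0 ≤ ρ ∧ ρ < 1 ∧ ∀ a b d : ℝ, 0 ≤ a → (1 + s) * a ≤ d →
      b ^ 2 ≤ d ^ 2 - 4 * s * a ^ 2 → a + ε * b ≤ ρ * d := by
  obtain ⟨k, hk1, hk⟩ := exists_sub_mul_sq_le hs hε hsε
  have hbound : ∀ a b d : ℝ, 0 ≤ a → (1 + s) * a ≤ d →
      b ^ 2 ≤ d ^ 2 - 4 * s * a ^ 2 → a + ε * b ≤ (ε + k) * d := by
    intro a b d ha had hb2
    have hd : 0 ≤ d := le_trans (by positivity) had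
    rcases hd.eq_or_lt with rfl | hd
    · have ha0 : a = 0 := by nlinarith
      have hb0 : b = 0 := by subst ha0; nlinarith
      simp [ha0, hb0]
    · refine le_of_mul_le_mul_right ?_ hd
      nlinarith [hk a d ha had, mul_le_mul_of_nonneg_left (mul_le_sq_sub_of_sq_le hb2) hε.1.le]
  exact ⟨ε + k, by simpa using hbound 0 0 1, hk1, hbound⟩

end ScalarBound

theorem pnp_drsdiff_fixed_point_convergence_general
    {E : Type*} [NormedAddCommGroup E] [InnerProductSpace ℝ E] [CompleteSpace E]
    (f : E → ℝ) (τ μ ε : ℝ) (hτ : 0 < τ) (hμ : 0 < μ)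
    (hstrong : ConvexOn ℝ Set.univ (fun x => f x - (μ / 2) * ‖x‖ ^ 2))
    (P : E → E)
    (hP : ∀ v z : E,
      f (P v) + (1 / (2 * τ)) * ‖P v - v‖ ^ 2 ≤ f z + (1 / (2 * τ)) * ‖z - v‖ ^ 2)
    (D : E → E) (hε : ε ∈ Set.Ioo (0 : ℝ) 1)
    (hres : ∀ u v : E, ‖(D u - u) - (D v - v)‖ ≤ ε * ‖u - v‖)
    (hτε : ε / ((1 + ε - 2 * ε ^ 2) * μ) < τ)
    (T : E → E)
    (hT : ∀ x : E, T x =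
      (1 / 2 : ℝ) • x +
        (1 / 2 : ℝ) • ((2 : ℝ) • D ((2 : ℝ) • P x - x) - ((2 : ℝ) • P x - x))) :
    (∃ ρ : ℝ, 0 ≤ ρ ∧ ρ < 1 ∧ ∀ x y : E, ‖T x - T y‖ ≤ ρ * ‖x - y‖) ∧
    ∃ xstar : E, T xstar = xstar ∧ (∀ x : E, T x = x → x = xstar) ∧
      ∀ x₀ : E, Tendsto (fun k : ℕ => T^[k] x₀) atTop (𝓝 xstar) := by
  have hsε : ε < τ * μ * (1 + ε - 2 * ε ^ 2) := by
    have hfac : 0 < 1 + ε - 2 * ε ^ 2 := by nlinarith [hε.1, hε.2]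
    rw [div_lt_iff₀ (by positivity)] at hτε
    linarith
  obtain ⟨ρ, hρ0, hρ1, hρ⟩ := exists_add_mul_le (mul_pos hτ hμ) hε hsε
  have hlip : ∀ x y : E, ‖T x - T y‖ ≤ ρ * ‖x - y‖ := fun x y => by
    have hco := prox_cocoercive hτ (strongConvexOn_iff_convex.2 hstrong) hP x y
    exact (norm_pnpDRS_sub_le hres hT x y).trans <| hρ _ _ _ (norm_nonneg _)
      (mul_norm_le_of_mul_norm_sq_le_inner hco) (norm_two_smul_sub_sq_le hco)
  have hT : ContractingWith ⟨ρ, hρ0⟩ T :=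
    ⟨hρ1, LipschitzWith.of_dist_le_mul fun x y => by
      rw [dist_eq_norm, dist_eq_norm]; exact hlip x y⟩
  have : Nonempty E := ⟨0⟩
  exact ⟨⟨ρ, hρ0, hρ1, hlip⟩, ContractingWith.fixedPoint T hT, hT.fixedPoint_isFixedPt,
    fun x hx => hT.fixedPoint_unique hx, hT.tendsto_iterate_fixedPoint⟩

/-- Fixed-point convergence of PnP-DRSdiff (Ryu et al.): if the data fidelity `f` is
`μ`-strongly convex, the denoiser residual `D - id` is `ε`-Lipschitz with `ε ∈ (0,1)`,
and `ε/((1 + ε - 2ε²)μ) < τ`, then the PnP-DRS operator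
`T = ½ id + ½ (2D - id)∘(2 prox_{τf} - id)` is a contraction, has a unique fixed point,
and the iterates converge to it from any initialization. -/
theorem pnp_drsdiff_fixed_point_convergence
    {E : Type*} [NormedAddCommGroup E] [InnerProductSpace ℝ E] [CompleteSpace E]
    (f : E → ℝ) (τ μ ε : ℝ) (hτ : 0 < τ) (hμ : 0 < μ)
    (hstrong : ConvexOn ℝ Set.univ (fun x => f x - (μ / 2) * ‖x‖ ^ 2))
    (hlsc : LowerSemicontinuous f)
    (P : E → E)
    (hP : ∀ v z : E,
      f (P v) + (1 / (2 * τ)) * ‖P v - v‖ ^ 2 ≤ f z + (1 / (2 * τ)) * ‖z - v‖ ^ 2)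
    (D : E → E) (hε : ε ∈ Set.Ioo (0 : ℝ) 1)
    (hres : ∀ u v : E, ‖(D u - u) - (D v - v)‖ ≤ ε * ‖u - v‖)
    (hτε : ε / ((1 + ε - 2 * ε ^ 2) * μ) < τ)
    (T : E → E)
    (hT : ∀ x : E, T x =
      (1 / 2 : ℝ) • x +
        (1 / 2 : ℝ) • ((2 : ℝ) • D ((2 : ℝ) • P x - x) - ((2 : ℝ) • P x - x))) :
    (∃ ρ : ℝ, 0 ≤ ρ ∧ ρ < 1 ∧ ∀ x y : E, ‖T x - T y‖ ≤ ρ * ‖x - y‖) ∧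
    ∃ xstar : E, T xstar = xstar ∧ (∀ x : E, T x = x → x = xstar) ∧
      ∀ x₀ : E, Tendsto (fun k : ℕ => T^[k] x₀) atTop (𝓝 xstar) :=
  pnp_drsdiff_fixed_point_convergence_general f τ μ ε hτ hμ hstrong P hP D hε hres hτε T hT
end

section
/- Let E be a real Hilbert space, D : E → E differentiable at x, and R(y) = (1/2)⟨y, y − D(y)⟩. Suppose the Jacobian of D at x is symmetric (⟨(DD)(x)u, v⟩ = ⟨u, (DD)(x)v⟩ for all u, v) and D is locally homogeneous at x in the differential sense, i.e., (DD)(x)(x) = D(x). Then the gradient of R at x equals the denoising residual: ∇R(x) = x − D(x). -/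
open scoped RealInnerProductSpace

/-! By the product rule the derivative of `y ↦ ½⟪y, y - D y⟫` at `x` is
`u ↦ ½(⟪u, x - D x⟫ + ⟪x, u - D' u⟫)`. Symmetry of `D'` rewrites `⟪x, D' u⟫` as `⟪D' x, u⟫`,
so the gradient is `x - ½(D x + D' x)`, and homogeneity `D' x = D x` collapses it to `x - D x`. -/

theorem hasGradientAt_half_inner_self_sub
    {E : Type*} [NormedAddCommGroup E] [InnerProductSpace ℝ E] [CompleteSpace E]
    {D : E → E} {D' : E →L[ℝ] E} {x : E} (hD : HasFDerivAt D D' x)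
    (hsym : (D' : E →ₗ[ℝ] E).IsSymmetric) :
    HasGradientAt (fun y => (1 / 2 : ℝ) * ⟪y, y - D y⟫) (x - (1 / 2 : ℝ) • (D x + D' x)) x := by
  have hres : HasFDerivAt (fun y => y - D y) (ContinuousLinearMap.id ℝ E - D') x :=
    (hasFDerivAt_id x).sub hD
  refine (((hasFDerivAt_id x).inner ℝ hres).const_mul (1 / 2 : ℝ)).congr_fderiv ?_
  ext u
  have hswap : ⟪x, D' u⟫ = ⟪D' x, u⟫ := (hsym x u).symm
  simp only [smul_apply, ContinuousLinearMap.comp_apply,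
    ContinuousLinearMap.prod_apply, fderivInnerCLM_apply, ContinuousLinearMap.id_apply,
    sub_apply, InnerProductSpace.toDual_apply_apply, smul_eq_mul,
    inner_sub_left, inner_sub_right, inner_add_left, real_inner_smul_left, id_eq]
  rw [hswap, real_inner_comm x u, real_inner_comm (D x) u]
  ring

/-- If the denoiser `D` has a symmetric Jacobian at `x` and is locally homogeneous at
`x` in the differential sense (`(DD)(x)(x) = D(x)`), then the gradient of the RED
regularizer `R(y) = ½⟨y, y - D(y)⟩` at `x` equals the denoising residual `x - D(x)`. -/
theorem red_gradient_eq_residual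
    {E : Type*} [NormedAddCommGroup E] [InnerProductSpace ℝ E] [CompleteSpace E]
    (D : E → E) (x : E) (D' : E →L[ℝ] E) (hD : HasFDerivAt D D' x)
    (hsym : ∀ u v : E, ⟪D' u, v⟫ = ⟪u, D' v⟫)
    (hhom : D' x = D x)
    (R : E → ℝ) (hR : ∀ y : E, R y = (1 / 2) * ⟪y, y - D y⟫) :
    HasGradientAt R (x - D x) x := by
  obtain rfl : R = fun y => (1 / 2 : ℝ) * ⟪y, y - D y⟫ := funext hR
  have hgrad := hasGradientAt_half_inner_self_sub hD hsym
  rwa [hhom, ← two_smul ℝ (D x), smul_smul, one_div_mul_cancel two_ne_zero, one_smul] at hgrad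
end

section
/- (α-averagedness of the RED-PG operator, Reehorst–Schniter Lemma 5) Let E be a real Hilbert space, f : E → ℝ convex and continuous, D : E → E nonexpansive (i.e., 1-Lipschitz), λ > 0 and L > 1. Define T : E → E by T(x) = prox_{f/(λL)}((1/L)D(x) + ((L−1)/L)x), i.e., T(x) is the unique minimizer of z ↦ f(z) + (λL/2)‖z − ((1/L)D(x) + ((L−1)/L)x)‖². Then T is α-averaged with α = max(2/(1+L), 2/3): there exists a nonexpansive map N : E → E such that T = (1−α)·id + α·N. -/
open scoped RealInnerProductSpace
open Filter Set Topology

/-!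
For `κ = (1 - α) / α`, the inequality `‖T x - T y‖² + κ ‖(x - T x) - (y - T y)‖² ≤ ‖x - y‖²`
is equivalent to `T` being `α`-averaged, and it composes: constants `κ₁` and `κ₂` give
`κ₁ κ₂ / (κ₁ + κ₂)`. The proximal map of a convex function satisfies it with `κ = 1`
(firm nonexpansiveness, from the variational inequality characterising the minimiser), and the
relaxation `(1/L) D + (1 - 1/L) id` of a nonexpansive `D` with `κ = L - 1`. Hence `T` satisfies
it with `κ = (L - 1) / L`, i.e. it is `L / (2L - 1)`-averaged, and `L / (2L - 1)` is at most
`max (2 / (1 + L)) (2 / 3)`.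
-/

section InnerProductSpace

variable {E : Type*} [NormedAddCommGroup E] [InnerProductSpace ℝ E]

theorem ConvexOn.sub_le_inner_of_isMinOn_add_norm_sub_sq {s : Set E} {f : E → ℝ}
    (hf : ConvexOn ℝ s f) {c : ℝ} {v p w : E}
    (hp : IsMinOn (fun z => f z + c * ‖z - v‖ ^ 2) s p) (hps : p ∈ s) (hws : w ∈ s) :
    f p - f w ≤ 2 * c * ⟪p - v, w - p⟫ := by
  have hsegment : ∀ t ∈ Ioc (0 : ℝ) 1,
      f p - f w ≤ 2 * c * ⟪p - v, w - p⟫ + c * t * ‖w - p‖ ^ 2 := by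
    rintro t ⟨ht₀, ht₁⟩
    have hzt : p + t • (w - p) = (1 - t) • p + t • w := by module
    have hconv : f (p + t • (w - p)) ≤ (1 - t) * f p + t * f w := by
      rw [hzt]
      exact hf.2 hps hws (sub_nonneg.2 ht₁) ht₀.le (by ring)
    have hmin : f p + c * ‖p - v‖ ^ 2 ≤ f (p + t • (w - p)) + c * ‖p + t • (w - p) - v‖ ^ 2 :=
      hp (hzt ▸ hf.1 hps hws (sub_nonneg.2 ht₁) ht₀.le (by ring))
    have hnorm : ‖p + t • (w - p) - v‖ ^ 2
        = ‖p - v‖ ^ 2 + 2 * t * ⟪p - v, w - p⟫ + t ^ 2 * ‖w - p‖ ^ 2 := by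
      rw [show p + t • (w - p) - v = (p - v) + t • (w - p) by abel, norm_add_sq_real,
        real_inner_smul_right, norm_smul, Real.norm_eq_abs, mul_pow, sq_abs]
      ring
    rw [hnorm] at hmin
    refine le_of_mul_le_mul_left ?_ ht₀
    nlinarith
  have hlim : Tendsto (fun t : ℝ => 2 * c * ⟪p - v, w - p⟫ + c * t * ‖w - p‖ ^ 2) (𝓝[>] 0)
      (𝓝 (2 * c * ⟪p - v, w - p⟫)) := by
    have hcont : Continuous fun t : ℝ => 2 * c * ⟪p - v, w - p⟫ + c * t * ‖w - p‖ ^ 2 := by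
      fun_prop
    exact tendsto_nhdsWithin_of_tendsto_nhds (hcont.tendsto' 0 _ (by simp))
  exact ge_of_tendsto hlim (mem_of_superset (Ioc_mem_nhdsGT one_pos) hsegment)

theorem ConvexOn.norm_sub_sq_add_norm_sub_sub_sq_le_of_isMinOn {s : Set E} {f : E → ℝ}
    (hf : ConvexOn ℝ s f) {c : ℝ} (hc : 0 < c) {u v p q : E}
    (hp : IsMinOn (fun z => f z + c * ‖z - u‖ ^ 2) s p)
    (hq : IsMinOn (fun z => f z + c * ‖z - v‖ ^ 2) s q) (hps : p ∈ s) (hqs : q ∈ s) :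
    ‖p - q‖ ^ 2 + ‖(u - v) - (p - q)‖ ^ 2 ≤ ‖u - v‖ ^ 2 := by
  have hpq := hf.sub_le_inner_of_isMinOn_add_norm_sub_sq hp hps hqs
  have hqp := hf.sub_le_inner_of_isMinOn_add_norm_sub_sq hq hqs hps
  have hsum : ⟪p - u, q - p⟫ + ⟪q - v, p - q⟫ = ⟪u - v, p - q⟫ - ‖p - q‖ ^ 2 := by
    rw [← real_inner_self_eq_norm_sq]
    simp only [inner_sub_left, inner_sub_right]
    ring
  have hmono : ‖p - q‖ ^ 2 ≤ ⟪u - v, p - q⟫ := by nlinarith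
  rw [norm_sub_sq_real (u - v) (p - q)]
  linarith

theorem norm_sq_add_mul_norm_sub_sq_le_of_norm_le {L : ℝ} (hL : 0 < L) {x d : E}
    (hd : ‖d‖ ≤ ‖x‖) :
    ‖(1 / L) • d + ((L - 1) / L) • x‖ ^ 2
      + (L - 1) * ‖x - ((1 / L) • d + ((L - 1) / L) • x)‖ ^ 2 ≤ ‖x‖ ^ 2 := by
  have hsub : x - ((1 / L) • d + ((L - 1) / L) • x) = (1 / L) • (x - d) := by
    rw [show (L - 1) / L = 1 - 1 / L by field_simp]
    module
  rw [hsub]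
  simp only [norm_add_sq_real, norm_sub_sq_real, norm_smul, real_inner_smul_left,
    real_inner_smul_right, Real.norm_eq_abs, mul_pow, sq_abs]
  have hd2 : ‖d‖ ^ 2 ≤ ‖x‖ ^ 2 := pow_le_pow_left₀ (norm_nonneg d) hd 2
  field_simp
  nlinarith [real_inner_comm x d]

theorem mul_mul_norm_add_sq_le (κ₁ κ₂ : ℝ) (a b : E) :
    κ₁ * κ₂ * ‖a + b‖ ^ 2 ≤ (κ₁ + κ₂) * (κ₂ * ‖a‖ ^ 2 + κ₁ * ‖b‖ ^ 2) := by
  have h := sq_nonneg ‖κ₂ • a - κ₁ • b‖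
  rw [norm_sub_sq_real, norm_smul, norm_smul, real_inner_smul_left, real_inner_smul_right,
    Real.norm_eq_abs, Real.norm_eq_abs, mul_pow, mul_pow, sq_abs, sq_abs] at h
  rw [norm_add_sq_real]
  nlinarith

theorem norm_sq_add_mul_norm_sub_sq_le_trans {κ₁ κ₂ : ℝ} (h₁ : 0 < κ₁) (h₂ : 0 < κ₂)
    {x v p : E} (hv : ‖v‖ ^ 2 + κ₂ * ‖x - v‖ ^ 2 ≤ ‖x‖ ^ 2)
    (hp : ‖p‖ ^ 2 + κ₁ * ‖v - p‖ ^ 2 ≤ ‖v‖ ^ 2) :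
    ‖p‖ ^ 2 + κ₁ * κ₂ / (κ₁ + κ₂) * ‖x - p‖ ^ 2 ≤ ‖x‖ ^ 2 := by
  have h := mul_mul_norm_add_sq_le κ₁ κ₂ (x - v) (v - p)
  rw [sub_add_sub_cancel] at h
  have hκ : κ₁ * κ₂ / (κ₁ + κ₂) * ‖x - p‖ ^ 2 ≤ κ₂ * ‖x - v‖ ^ 2 + κ₁ * ‖v - p‖ ^ 2 := by
    rw [div_mul_eq_mul_div, div_le_iff₀ (by positivity)]
    linarith
  linarith

theorem norm_sub_smul_le_of_norm_sq_add_mul_norm_sub_sq_le {κ α : ℝ} (hα : 0 < α)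
    (hκ : 1 - α ≤ κ * α) {x p : E} (h : ‖p‖ ^ 2 + κ * ‖x - p‖ ^ 2 ≤ ‖x‖ ^ 2) :
    ‖p - (1 - α) • x‖ ≤ α * ‖x‖ := by
  have hid : α * ‖x‖ ^ 2 - α * ‖p‖ ^ 2 - (1 - α) * ‖x - p‖ ^ 2
      = (α * ‖x‖) ^ 2 - ‖p - (1 - α) • x‖ ^ 2 := by
    simp only [norm_sub_sq_real, norm_smul, real_inner_smul_right, real_inner_comm x p,
      Real.norm_eq_abs, mul_pow, sq_abs]
    ring
  have hslack : (1 - α) * ‖x - p‖ ^ 2 ≤ κ * α * ‖x - p‖ ^ 2 :=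
    mul_le_mul_of_nonneg_right hκ (sq_nonneg _)
  refine (pow_le_pow_iff_left₀ (norm_nonneg _) (by positivity) two_ne_zero).1 ?_
  nlinarith

end InnerProductSpace

theorem exists_nonexpansive_eq_smul_add_smul {F : Type*} [NormedAddCommGroup F]
    [NormedSpace ℝ F] {T : F → F} {α : ℝ} (hα : 0 < α)
    (hT : ∀ x y, ‖T x - T y - (1 - α) • (x - y)‖ ≤ α * ‖x - y‖) :
    ∃ N : F → F, (∀ x y, ‖N x - N y‖ ≤ ‖x - y‖) ∧ ∀ x, T x = (1 - α) • x + α • N x := by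
  refine ⟨fun x => α⁻¹ • (T x - (1 - α) • x), fun x y => ?_, fun x => ?_⟩
  · rw [← smul_sub, norm_smul, Real.norm_eq_abs, abs_of_pos (inv_pos.2 hα),
      inv_mul_le_iff₀ hα, show T x - (1 - α) • x - (T y - (1 - α) • y)
        = T x - T y - (1 - α) • (x - y) by module]
    exact hT x y
  · rw [smul_smul, mul_inv_cancel₀ hα.ne', one_smul]
    abel

-- `1 - α ≤ κ α` with `κ = (L - 1) / L` says `α ≥ L / (2L - 1)`.
theorem one_sub_max_le_mul_max {L : ℝ} (hL : 1 < L) :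
    1 - max (2 / (1 + L)) (2 / 3) ≤ (L - 1) / L * max (2 / (1 + L)) (2 / 3) := by
  rw [div_mul_eq_mul_div, le_div_iff₀ (by linarith)]
  rcases le_total L 2 with hL2 | hL2
  · have h := le_max_left (2 / (1 + L)) (2 / 3)
    rw [div_le_iff₀ (by linarith)] at h
    nlinarith
  · nlinarith [le_max_right (2 / (1 + L)) (2 / 3)]

theorem red_pg_operator_averaged_general
    {E : Type*} [NormedAddCommGroup E] [InnerProductSpace ℝ E]
    (f : E → ℝ) (hf : ConvexOn ℝ Set.univ f)
    (D : E → E) (hD : ∀ x y : E, ‖D x - D y‖ ≤ ‖x - y‖)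
    (lam L : ℝ) (hlam : 0 < lam) (hL : 1 < L)
    (T : E → E)
    (hT : ∀ (x z : E),
      f (T x) + (lam * L / 2) * ‖T x - ((1 / L) • D x + ((L - 1) / L) • x)‖ ^ 2
        ≤ f z + (lam * L / 2) * ‖z - ((1 / L) • D x + ((L - 1) / L) • x)‖ ^ 2) :
    ∃ N : E → E, (∀ x y : E, ‖N x - N y‖ ≤ ‖x - y‖) ∧
      ∀ x : E, T x = (1 - max (2 / (1 + L)) (2 / 3)) • x
        + (max (2 / (1 + L)) (2 / 3)) • N x := by
  set B : E → E := fun x => (1 / L) • D x + ((L - 1) / L) • x with hB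
  have hL₀ : 0 < L := by linarith
  have hα : 0 < max (2 / (1 + L)) (2 / 3) := lt_max_of_lt_right (by norm_num)
  refine exists_nonexpansive_eq_smul_add_smul hα fun x y => ?_
  have hBxy : ‖B x - B y‖ ^ 2 + (L - 1) * ‖(x - y) - (B x - B y)‖ ^ 2 ≤ ‖x - y‖ ^ 2 := by
    rw [show B x - B y = (1 / L) • (D x - D y) + ((L - 1) / L) • (x - y) by
      simp only [hB]; module]
    exact norm_sq_add_mul_norm_sub_sq_le_of_norm_le hL₀ (hD x y)
  have hTxy : ‖T x - T y‖ ^ 2 + 1 * ‖(B x - B y) - (T x - T y)‖ ^ 2 ≤ ‖B x - B y‖ ^ 2 := by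
    rw [one_mul]
    exact hf.norm_sub_sq_add_norm_sub_sub_sq_le_of_isMinOn (by positivity)
      (isMinOn_univ_iff.2 (hT x)) (isMinOn_univ_iff.2 (hT y)) (mem_univ _) (mem_univ _)
  have hcomp := norm_sq_add_mul_norm_sub_sq_le_trans one_pos (sub_pos.2 hL) hBxy hTxy
  rw [show 1 * (L - 1) / (1 + (L - 1)) = (L - 1) / L by ring] at hcomp
  exact norm_sub_smul_le_of_norm_sq_add_mul_norm_sub_sq_le hα (one_sub_max_le_mul_max hL) hcomp

/-- α-averagedness of the RED-PG operator (Reehorst–Schniter, Lemma 5): with `f` convex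
and continuous, `D` nonexpansive and `L > 1`, the operator
`T(x) = prox_{f/(λL)}((1/L)D(x) + ((L-1)/L)x)` is `α`-averaged with
`α = max (2/(1+L)) (2/3)`. -/
theorem red_pg_operator_averaged
    {E : Type*} [NormedAddCommGroup E] [InnerProductSpace ℝ E] [CompleteSpace E]
    (f : E → ℝ) (hf : ConvexOn ℝ Set.univ f) (hfc : Continuous f)
    (D : E → E) (hD : ∀ x y : E, ‖D x - D y‖ ≤ ‖x - y‖)
    (lam L : ℝ) (hlam : 0 < lam) (hL : 1 < L)
    (T : E → E)
    (hT : ∀ (x z : E),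
      f (T x) + (lam * L / 2) * ‖T x - ((1 / L) • D x + ((L - 1) / L) • x)‖ ^ 2
        ≤ f z + (lam * L / 2) * ‖z - ((1 / L) • D x + ((L - 1) / L) • x)‖ ^ 2) :
    ∃ N : E → E, (∀ x y : E, ‖N x - N y‖ ≤ ‖x - y‖) ∧
      ∀ x : E, T x = (1 - max (2 / (1 + L)) (2 / 3)) • x
        + (max (2 / (1 + L)) (2 / 3)) • N x :=
  red_pg_operator_averaged_general f hf D hD lam L hlam hL T hT
end

section
/- (Convergence of RED-PG, Reehorst–Schniter Theorem 2) Let E be a finite-dimensional real inner product space, f : E → ℝ convex and continuous, D : E → E nonexpansive (1-Lipschitz), λ > 0 and L > 1. Define T(x) = prox_{f/(λL)}((1/L)D(x) + ((L−1)/L)x), and suppose T has at least one fixed point. Then for any initialization x₀ ∈ E, the iterates x_{k+1} = T(x_k) converge to a fixed point of T. -/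
/-!
The proximal step of a convex function is firmly nonexpansive (variational inequality of the
minimiser), and for `L > 1` the relaxation `(1/L) D + (1 - 1/L) id` of a nonexpansive `D` is
averaged. Chaining the two estimates gives, for `β = min 1 (L - 1) / 2`,
`‖T x - T y‖² + β ‖(x - T x) - (y - T y)‖² ≤ ‖x - y‖²`. Against a fixed point this makes the
orbit Fejér monotone with square-summable steps; by compactness some subsequence converges, its
limit is fixed because the steps tend to `0`, and Fejér monotonicity towards that limit forces
the whole orbit to converge to it.
-/

open Filter Topology Set Function Finset
open scoped RealInnerProductSpace

section InnerProduct

variable {E : Type*} [NormedAddCommGroup E] [InnerProductSpace ℝ E]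

theorem ConvexOn.mul_inner_le_of_isMinOn_add_sq {f : E → ℝ} (hf : ConvexOn ℝ univ f) {c : ℝ}
    {v p : E} (hp : IsMinOn (fun z => f z + c / 2 * ‖z - v‖ ^ 2) univ p) (z : E) :
    c * ⟪v - p, z - p⟫ ≤ f z - f p := by
  -- compare `p` with the points `(1 - t) • p + t • z` of the segment and let `t → 0⁺`
  have hsegment : ∀ t ∈ Ioc (0 : ℝ) 1,
      f p - f z ≤ c * ⟪p - v, z - p⟫ + c / 2 * t * ‖z - p‖ ^ 2 := by
    rintro t ⟨ht0, ht1⟩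
    have hconv := hf.2 (mem_univ p) (mem_univ z) (sub_nonneg.2 ht1) ht0.le (by ring)
    have hmin := isMinOn_univ_iff.1 hp ((1 - t) • p + t • z)
    have hexpand : ‖(1 - t) • p + t • z - v‖ ^ 2
        = ‖p - v‖ ^ 2 + 2 * (t * ⟪p - v, z - p⟫) + t ^ 2 * ‖z - p‖ ^ 2 := by
      rw [show (1 - t) • p + t • z - v = (p - v) + t • (z - p) by module, norm_add_sq_real,
        real_inner_smul_right, norm_smul, Real.norm_eq_abs, abs_of_pos ht0, mul_pow]
    simp only [hexpand, smul_eq_mul] at hmin hconv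
    refine le_of_mul_le_mul_left ?_ ht0
    nlinarith
  have hlim : Tendsto (fun t : ℝ => c * ⟪p - v, z - p⟫ + c / 2 * t * ‖z - p‖ ^ 2) (𝓝[>] 0)
      (𝓝 (c * ⟪p - v, z - p⟫)) := by
    have hcont : Continuous fun t : ℝ => c * ⟪p - v, z - p⟫ + c / 2 * t * ‖z - p‖ ^ 2 := by
      fun_prop
    simpa using hcont.continuousWithinAt (s := Ioi 0) (x := 0) |>.tendsto
  have hle := ge_of_tendsto hlim (eventually_of_mem (Ioc_mem_nhdsGT one_pos) hsegment)
  rw [← neg_sub p v, inner_neg_left]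
  linarith

theorem ConvexOn.norm_sub_sq_le_inner_of_isMinOn_add_sq {f : E → ℝ} (hf : ConvexOn ℝ univ f)
    {c : ℝ} (hc : 0 < c) {u v p q : E}
    (hp : IsMinOn (fun z => f z + c / 2 * ‖z - u‖ ^ 2) univ p)
    (hq : IsMinOn (fun z => f z + c / 2 * ‖z - v‖ ^ 2) univ q) :
    ‖p - q‖ ^ 2 ≤ ⟪u - v, p - q⟫ := by
  have hpq := hf.mul_inner_le_of_isMinOn_add_sq hp q
  have hqp := hf.mul_inner_le_of_isMinOn_add_sq hq p
  have hsum : ⟪u - p, q - p⟫ + ⟪v - q, p - q⟫ ≤ 0 := by nlinarith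
  have hid : ⟪u - p, q - p⟫ + ⟪v - q, p - q⟫ = ‖p - q‖ ^ 2 - ⟪u - v, p - q⟫ := by
    rw [← real_inner_self_eq_norm_sq, ← neg_sub p q, inner_neg_right,
      neg_add_eq_sub, ← inner_sub_left, ← inner_sub_left]
    congr 1
    abel
  linarith

theorem norm_sq_add_norm_sub_sq_le_of_norm_sq_le_inner {a b : E} (h : ‖a‖ ^ 2 ≤ ⟪b, a⟫) :
    ‖a‖ ^ 2 + ‖b - a‖ ^ 2 ≤ ‖b‖ ^ 2 := by
  rw [norm_sub_sq_real]
  linarith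

noncomputable def relaxation (D : E → E) (L : ℝ) (x : E) : E :=
  (1 / L) • D x + ((L - 1) / L) • x

theorem norm_relaxation_sub_sq_add_mul_le {D : E → E} (hD : ∀ x y, ‖D x - D y‖ ≤ ‖x - y‖)
    {L : ℝ} (hL : 0 < L) (x y : E) :
    ‖relaxation D L x - relaxation D L y‖ ^ 2
      + (L - 1) * ‖(x - relaxation D L x) - (y - relaxation D L y)‖ ^ 2 ≤ ‖x - y‖ ^ 2 := by
  have hsub : relaxation D L x - relaxation D L y
      = (1 / L) • (D x - D y) + ((L - 1) / L) • (x - y) := by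
    simp only [relaxation]
    module
  have hres : (x - relaxation D L x) - (y - relaxation D L y)
      = (1 / L) • ((x - y) - (D x - D y)) := by
    simp only [relaxation]
    match_scalars <;> field_simp <;> ring
  have hsq : ‖D x - D y‖ ^ 2 ≤ ‖x - y‖ ^ 2 := pow_le_pow_left₀ (norm_nonneg _) (hD x y) 2
  -- with `θ = 1 / L`, the left side equals `θ ‖D x - D y‖² + (1 - θ) ‖x - y‖²`
  rw [hsub, hres, norm_add_sq_real, norm_smul, norm_smul, norm_smul, mul_pow, mul_pow, mul_pow,
    norm_sub_sq_real (x - y), real_inner_smul_left, real_inner_smul_right,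
    real_inner_comm (x - y), Real.norm_eq_abs, Real.norm_eq_abs, sq_abs, sq_abs]
  field_simp
  nlinarith

end InnerProduct

theorem norm_sub_sq_add_min_mul_le {E : Type*} [SeminormedAddCommGroup E] {x y u v p q : E}
    {a b : ℝ} (ha : 0 ≤ a) (hb : 0 ≤ b)
    (hpq : ‖p - q‖ ^ 2 + a * ‖(u - p) - (v - q)‖ ^ 2 ≤ ‖u - v‖ ^ 2)
    (huv : ‖u - v‖ ^ 2 + b * ‖(x - u) - (y - v)‖ ^ 2 ≤ ‖x - y‖ ^ 2) :
    ‖p - q‖ ^ 2 + min a b / 2 * ‖(x - p) - (y - q)‖ ^ 2 ≤ ‖x - y‖ ^ 2 := by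
  set r := (x - u) - (y - v)
  set w := (u - p) - (v - q)
  have hsplit : (x - p) - (y - q) = r + w := by simp only [r, w]; abel
  have hrw : ‖r + w‖ ^ 2 ≤ 2 * (‖r‖ ^ 2 + ‖w‖ ^ 2) :=
    (pow_le_pow_left₀ (norm_nonneg _) (norm_add_le r w) 2).trans add_sq_le
  have hmin : min a b * (‖r‖ ^ 2 + ‖w‖ ^ 2) ≤ b * ‖r‖ ^ 2 + a * ‖w‖ ^ 2 := by
    rw [mul_add]
    exact add_le_add (mul_le_mul_of_nonneg_right (min_le_right a b) (sq_nonneg _))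
      (mul_le_mul_of_nonneg_right (min_le_left a b) (sq_nonneg _))
  rw [hsplit]
  nlinarith [mul_le_mul_of_nonneg_left hrw (le_min ha hb)]

section Iteration

variable {α : Type*}

theorem tendsto_dist_iterate_succ_of_sq_dist_le [PseudoMetricSpace α] {T : α → α} {y : α}
    {β : ℝ} (hβ : 0 < β) (hT : ∀ x, dist (T x) y ^ 2 + β * dist (T x) x ^ 2 ≤ dist x y ^ 2)
    (x : α) : Tendsto (fun k => dist (T^[k + 1] x) (T^[k] x)) atTop (𝓝 0) := by
  set e : ℕ → ℝ := fun k => dist (T^[k] x) y ^ 2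
  have hstep : ∀ k, β * dist (T^[k + 1] x) (T^[k] x) ^ 2 ≤ e k - e (k + 1) := fun k => by
    have := hT (T^[k] x)
    simp only [e, iterate_succ_apply']
    linarith
  have hsummable : Summable fun k => β * dist (T^[k + 1] x) (T^[k] x) ^ 2 := by
    refine summable_of_sum_range_le (c := e 0) (fun k => by positivity) fun n => ?_
    refine (sum_le_sum fun k _ => hstep k).trans ?_
    rw [sum_range_sub']
    simp only [e]
    linarith [sq_nonneg (dist (T^[n] x) y)]
  have hsq : Tendsto (fun k => dist (T^[k + 1] x) (T^[k] x) ^ 2) atTop (𝓝 0) := by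
    simpa [hβ.ne'] using hsummable.tendsto_atTop_zero.const_mul β⁻¹
  simpa [Real.sqrt_sq dist_nonneg] using hsq.sqrt

theorem exists_isFixedPt_tendsto_iterate [MetricSpace α] [ProperSpace α] {T : α → α}
    (hT : LipschitzWith 1 T) {y : α} (hy : IsFixedPt T y) {x : α}
    (hreg : Tendsto (fun k => dist (T^[k + 1] x) (T^[k] x)) atTop (𝓝 0)) :
    ∃ z, IsFixedPt T z ∧ Tendsto (fun k => T^[k] x) atTop (𝓝 z) := by
  have hfejer : ∀ z, IsFixedPt T z → Antitone fun k => dist (T^[k] x) z :=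
    fun z hz => antitone_nat_of_succ_le fun k => by
      simpa [iterate_succ_apply', hz.eq] using hT.dist_le_mul (T^[k] x) z
  obtain ⟨z, -, φ, hφ, hsub⟩ := tendsto_subseq_of_bounded (Metric.isBounded_closedBall)
    fun k => Metric.mem_closedBall.2 (hfejer y hy (Nat.zero_le k))
  have hz : IsFixedPt T z := by
    have hnext : Tendsto (fun k => T^[φ k + 1] x) atTop (𝓝 z) :=
      hsub.congr_dist ((hreg.comp hφ.tendsto_atTop).congr fun k => dist_comm _ _)
    have hnext' : Tendsto (fun k => T^[φ k + 1] x) atTop (𝓝 (T z)) := by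
      refine ((hT.continuous.tendsto z).comp hsub).congr fun k => ?_
      exact (iterate_succ_apply' T (φ k) x).symm
    exact tendsto_nhds_unique hnext' hnext
  refine ⟨z, hz, Metric.tendsto_atTop.2 fun ε hε => ?_⟩
  obtain ⟨N, hN⟩ := Metric.tendsto_atTop.1 hsub ε hε
  exact ⟨φ N, fun k hk => (hfejer z hz hk).trans_lt (hN N le_rfl)⟩

end Iteration

theorem exists_isFixedPt_tendsto_iterate_of_norm_sub_sq_add_mul_le {E : Type*}
    [NormedAddCommGroup E] [ProperSpace E] {T : E → E} {β : ℝ} (hβ : 0 < β)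
    (hT : ∀ x y, ‖T x - T y‖ ^ 2 + β * ‖(x - T x) - (y - T y)‖ ^ 2 ≤ ‖x - y‖ ^ 2)
    (hfix : ∃ y, IsFixedPt T y) (x : E) :
    ∃ z, IsFixedPt T z ∧ Tendsto (fun k => T^[k] x) atTop (𝓝 z) := by
  obtain ⟨y, hy⟩ := hfix
  have hlip : LipschitzWith 1 T := LipschitzWith.of_dist_le_mul fun x y => by
    rw [dist_eq_norm, dist_eq_norm, NNReal.coe_one, one_mul,
      ← sq_le_sq₀ (norm_nonneg _) (norm_nonneg _)]
    exact (le_add_of_nonneg_right (by positivity)).trans (hT x y)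
  have hquasi : ∀ x, dist (T x) y ^ 2 + β * dist (T x) x ^ 2 ≤ dist x y ^ 2 := fun x => by
    simpa [dist_eq_norm, hy.eq, norm_sub_rev] using hT x y
  exact exists_isFixedPt_tendsto_iterate hlip hy
    (tendsto_dist_iterate_succ_of_sq_dist_le hβ hquasi x)

theorem red_pg_convergence_general
    {E : Type*} [NormedAddCommGroup E] [InnerProductSpace ℝ E] [FiniteDimensional ℝ E]
    (f : E → ℝ) (hf : ConvexOn ℝ Set.univ f)
    (D : E → E) (hD : ∀ x y : E, ‖D x - D y‖ ≤ ‖x - y‖)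
    (lam L : ℝ) (hlam : 0 < lam) (hL : 1 < L)
    (T : E → E)
    (hT : ∀ (x z : E),
      f (T x) + (lam * L / 2) * ‖T x - ((1 / L) • D x + ((L - 1) / L) • x)‖ ^ 2
        ≤ f z + (lam * L / 2) * ‖z - ((1 / L) • D x + ((L - 1) / L) • x)‖ ^ 2)
    (hfix : ∃ xf : E, T xf = xf) :
    ∀ x₀ : E, ∃ xf : E, T xf = xf ∧ Tendsto (fun k : ℕ => T^[k] x₀) atTop (𝓝 xf) := by
  have hL0 : 0 < L := by linarith
  have hprox : ∀ x y, ‖T x - T y‖ ^ 2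
      + ‖(relaxation D L x - T x) - (relaxation D L y - T y)‖ ^ 2
      ≤ ‖relaxation D L x - relaxation D L y‖ ^ 2 := fun x y => by
    have hfirm := hf.norm_sub_sq_le_inner_of_isMinOn_add_sq (by positivity)
      (isMinOn_univ_iff.2 (hT x)) (isMinOn_univ_iff.2 (hT y))
    rw [← sub_sub_sub_comm]
    exact norm_sq_add_norm_sub_sq_le_of_norm_sq_le_inner hfirm
  have hTavg : ∀ x y, ‖T x - T y‖ ^ 2 + min 1 (L - 1) / 2 * ‖(x - T x) - (y - T y)‖ ^ 2
      ≤ ‖x - y‖ ^ 2 := fun x y =>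
    norm_sub_sq_add_min_mul_le zero_le_one (by linarith) (by rw [one_mul]; exact hprox x y)
      (norm_relaxation_sub_sq_add_mul_le hD hL0 x y)
  exact exists_isFixedPt_tendsto_iterate_of_norm_sub_sq_add_mul_le
    (half_pos (lt_min one_pos (sub_pos.2 hL))) hTavg hfix

/-- Convergence of RED-PG (Reehorst–Schniter, Theorem 2): in finite dimension, with `f`
convex continuous, `D` nonexpansive, `L > 1`, and assuming the RED-PG operator `T` has
a fixed point, the iterates `x_{k+1} = T(x_k)` converge to a fixed point of `T`. -/
theorem red_pg_convergence
    {E : Type*} [NormedAddCommGroup E] [InnerProductSpace ℝ E] [FiniteDimensional ℝ E]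
    (f : E → ℝ) (hf : ConvexOn ℝ Set.univ f) (hfc : Continuous f)
    (D : E → E) (hD : ∀ x y : E, ‖D x - D y‖ ≤ ‖x - y‖)
    (lam L : ℝ) (hlam : 0 < lam) (hL : 1 < L)
    (T : E → E)
    (hT : ∀ (x z : E),
      f (T x) + (lam * L / 2) * ‖T x - ((1 / L) • D x + ((L - 1) / L) • x)‖ ^ 2
        ≤ f z + (lam * L / 2) * ‖z - ((1 / L) • D x + ((L - 1) / L) • x)‖ ^ 2)
    (hfix : ∃ xf : E, T xf = xf) :
    ∀ x₀ : E, ∃ xf : E, T xf = xf ∧ Tendsto (fun k : ℕ => T^[k] x₀) atTop (𝓝 xf) :=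
  red_pg_convergence_general f hf D hD lam L hlam hL T hT hfix
end
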